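/- arXiv:1107.4142 — 3 statements merged into one kernel-verified Lean document; each statement's English description precedes it below -/
import Mathlib

section
/- Under assumptions (A1)–(A3), for every T > 0 there exists a finite constant C_1(T) such that for any ν, ξ ∈ M_1(Z) there is a continuous, piecewise linear path μ : [0,T] → M_1(Z) with constant velocity on each linear segment, μ(0) = ν, μ(T) = ξ, and S_{[0,T]}(μ|ν) ≤ C_1(T); consequently S_T(ξ|ν) ≤ C_1(T) for all ν, ξ ∈ M_1(Z). -/
open MeasureTheory Set ENNReal Filter

noncomputable section

/-- The Legendre conjugate `τ*(u) = (u+1)·log(u+1) − u`.  Since `Real.log 0 = 0`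
in Mathlib, this gives `τ*(-1) = 1`, matching the convention of the paper; the
value for `u < -1` is irrelevant since all arguments below are `≥ -1`. -/
def tauStar (u : ℝ) : ℝ := (u + 1) * Real.log (u + 1) - u

/-- The mean field model: state space `Fin r`, directed edge set `E` without
self-loops, and transition rate functions `lam i j`, together with assumptions
(A1) (irreducibility), (A2) (Lipschitz rates) and (A3) (rates on edges bounded
below by `c > 0`); `Cb` is the upper bound on the rates (a consequence of
(A2) and compactness of the simplex). -/
structure MeanFieldModel (r : ℕ) where
  E : Finset (Fin r × Fin r)
  no_diag : ∀ i : Fin r, (i, i) ∉ E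
  /-- (A1): the directed graph `(Z, E)` is irreducible. -/
  irreducible : ∀ i j : Fin r, Relation.ReflTransGen (fun a b => (a, b) ∈ E) i j
  lam : Fin r → Fin r → (Fin r → ℝ) → ℝ
  /-- (A2): each rate function is Lipschitz on the simplex. -/
  lam_lipschitz : ∀ p ∈ E, ∃ K : NNReal, LipschitzOnWith K (lam p.1 p.2) (stdSimplex ℝ (Fin r))
  c : ℝ
  c_pos : 0 < c
  /-- (A3): rates of admissible jumps are uniformly bounded away from zero. -/
  lam_lower : ∀ p ∈ E, ∀ μ ∈ stdSimplex ℝ (Fin r), c ≤ lam p.1 p.2 μ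
  /-- rates vanish off the edge set -/
  lam_off : ∀ i j : Fin r, i ≠ j → (i, j) ∉ E → ∀ μ : Fin r → ℝ, lam i j μ = 0
  /-- diagonal convention `λ_{i,i} = −Σ_{j≠i} λ_{i,j}` -/
  lam_diag : ∀ i : Fin r, ∀ μ : Fin r → ℝ,
    lam i i μ = -∑ j ∈ Finset.univ.filter (fun j => j ≠ i), lam i j μ
  Cb : ℝ
  /-- upper bound on the rates -/
  lam_upper : ∀ p ∈ E, ∀ μ ∈ stdSimplex ℝ (Fin r), lam p.1 p.2 μ ≤ Cb

variable {r : ℕ}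

/-- A time-varying rate matrix `L(t)` adapted to the model: measurable entries,
nonnegative off-diagonal entries, entries vanishing off the edge set, and the
diagonal convention `l_{i,i}(t) = −Σ_{j≠i} l_{i,j}(t)`. -/
def IsRateMatrix (M : MeanFieldModel r) (L : ℝ → Fin r → Fin r → ℝ) : Prop :=
  (∀ i j : Fin r, Measurable fun t => L t i j) ∧
  (∀ t : ℝ, ∀ i j : Fin r, i ≠ j → 0 ≤ L t i j) ∧
  (∀ t : ℝ, ∀ i j : Fin r, i ≠ j → (i, j) ∉ M.E → L t i j = 0) ∧
  (∀ t : ℝ, ∀ i : Fin r,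
    L t i i = -∑ j ∈ Finset.univ.filter (fun j => j ≠ i), L t i j)

/-- `μ` is absolutely continuous on `[0,T]` with `μ̇(t) = L(t)ᵀ μ(t)` a.e.,
expressed in integral form:  `μ(t) = μ(0) + ∫_0^t L(s)ᵀ μ(s) ds`. -/
def SolvesODE (L : ℝ → Fin r → Fin r → ℝ) (μ : ℝ → Fin r → ℝ) (T : ℝ) : Prop :=
  (∀ i : Fin r, IntegrableOn (fun t => ∑ j, L t j i * μ t j) (Icc 0 T)) ∧
  ∀ t ∈ Icc (0 : ℝ) T, ∀ i : Fin r,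
    μ t i = μ 0 i + ∫ s in Ioc (0 : ℝ) t, ∑ j, L s j i * μ s j

/-- `μ` is absolutely continuous on `[0,∞)` with `μ̇(t) = −L(t)ᵀ μ(t)` a.e.
(reversed-time dynamics), in integral form. -/
def SolvesReversedODE (L : ℝ → Fin r → Fin r → ℝ) (μ : ℝ → Fin r → ℝ) : Prop :=
  (∀ T : ℝ, 0 < T → ∀ i : Fin r,
    IntegrableOn (fun t => ∑ j, L t j i * μ t j) (Icc 0 T)) ∧
  ∀ t : ℝ, 0 ≤ t → ∀ i : Fin r,
    μ t i = μ 0 i - ∫ s in Ioc (0 : ℝ) t, ∑ j, L s j i * μ s j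

/-- The running cost
`I_{[0,T]}(μ, L) = ∫_0^T Σ_{(i,j)∈E} μ(t)(i) λ_{i,j}(μ(t)) τ*( l_{i,j}(t)/λ_{i,j}(μ(t)) − 1 ) dt`. -/
def runningCost (M : MeanFieldModel r) (μ : ℝ → Fin r → ℝ)
    (L : ℝ → Fin r → Fin r → ℝ) (T : ℝ) : ℝ≥0∞ :=
  ∫⁻ t in Ioc (0 : ℝ) T, ENNReal.ofReal (∑ p ∈ M.E,
    μ t p.1 * M.lam p.1 p.2 (μ t) * tauStar (L t p.1 p.2 / M.lam p.1 p.2 (μ t) - 1))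

/-- The infinite-horizon running cost on `[0, ∞)`. -/
def runningCostInf (M : MeanFieldModel r) (μ : ℝ → Fin r → ℝ)
    (L : ℝ → Fin r → Fin r → ℝ) : ℝ≥0∞ :=
  ∫⁻ t in Ioi (0 : ℝ), ENNReal.ofReal (∑ p ∈ M.E,
    μ t p.1 * M.lam p.1 p.2 (μ t) * tauStar (L t p.1 p.2 / M.lam p.1 p.2 (μ t) - 1))

/-- `S_{[0,T]}(μ | ν)`: the infimum of the running cost over all time-varying
rate matrices `L` with `μ̇ = Lᵀ μ` a.e., provided `μ(0) = ν`, `μ` is absolutely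
continuous and takes values in `M₁(Z)`; `+∞` otherwise (the infimum over an
empty family being `⊤`). -/
def SPath (M : MeanFieldModel r) (T : ℝ) (ν : Fin r → ℝ) (μ : ℝ → Fin r → ℝ) : ℝ≥0∞ :=
  ⨅ (L : ℝ → Fin r → Fin r → ℝ)
    (_ : IsRateMatrix M L ∧ SolvesODE L μ T ∧ μ 0 = ν ∧
      ∀ t ∈ Icc (0 : ℝ) T, μ t ∈ stdSimplex ℝ (Fin r)),
    runningCost M μ L T

/-- `S_T(ξ | ν) = inf { S_{[0,T]}(μ|ν) : μ(0) = ν, μ(T) = ξ }`. -/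
def SEnd (M : MeanFieldModel r) (T : ℝ) (ν ξ : Fin r → ℝ) : ℝ≥0∞ :=
  ⨅ (μ : ℝ → Fin r → ℝ) (_ : μ 0 = ν ∧ μ T = ξ), SPath M T ν μ

/-- The quasipotential `V(ξ | ν) = inf_{T > 0} S_T(ξ | ν)`. -/
def quasipotential (M : MeanFieldModel r) (ν ξ : Fin r → ℝ) : ℝ≥0∞ :=
  ⨅ (T : ℝ) (_ : 0 < T), SEnd M T ν ξ

/-- Equivalence of points: `ν ∼ ξ` iff `V(ξ|ν) = V(ν|ξ) = 0`. -/
def VEquiv (M : MeanFieldModel r) (ν ξ : Fin r → ℝ) : Prop :=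
  quasipotential M ν ξ = 0 ∧ quasipotential M ξ ν = 0

/-- `s` satisfies the dynamic programming equation
`s(ξ) = inf_{ν ∈ M₁(Z)} [ s(ν) + S_T(ξ|ν) ]` for every `T > 0`. -/
def SatisfiesDPE (M : MeanFieldModel r) (s : (Fin r → ℝ) → ℝ) : Prop :=
  ∀ T : ℝ, 0 < T → ∀ ξ ∈ stdSimplex ℝ (Fin r),
    ENNReal.ofReal (s ξ) =
      ⨅ ν ∈ stdSimplex ℝ (Fin r), (ENNReal.ofReal (s ν) + SEnd M T ν ξ)

/-- A solution of the McKean–Vlasov equation `μ̇(t) = A_{μ(t)}ᵀ μ(t)` on `[0,∞)`,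
as a path in `M₁(Z)`, in integral form. -/
def IsMVSolution (M : MeanFieldModel r) (η : ℝ → Fin r → ℝ) : Prop :=
  (∀ t : ℝ, 0 ≤ t → η t ∈ stdSimplex ℝ (Fin r)) ∧
  (∀ T : ℝ, 0 < T → ∀ i : Fin r,
    IntegrableOn (fun t => ∑ j, M.lam j i (η t) * η t j) (Icc 0 T)) ∧
  ∀ t : ℝ, 0 ≤ t → ∀ i : Fin r,
    η t i = η 0 i + ∫ s in Ioc (0 : ℝ) t, ∑ j, M.lam j i (η s) * η s j

/-- A solution of the time-reversed McKean–Vlasov equation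
`η̇(t) = −A_{η(t)}ᵀ η(t)` on `[0,∞)`, in integral form. -/
def IsReversedMVSolution (M : MeanFieldModel r) (η : ℝ → Fin r → ℝ) : Prop :=
  (∀ T : ℝ, 0 < T → ∀ i : Fin r,
    IntegrableOn (fun t => ∑ j, M.lam j i (η t) * η t j) (Icc 0 T)) ∧
  ∀ t : ℝ, 0 ≤ t → ∀ i : Fin r,
    η t i = η 0 i - ∫ s in Ioc (0 : ℝ) t, ∑ j, M.lam j i (η s) * η s j

/-- `ξ₀` is the unique globally asymptotically stable equilibrium of the
McKean–Vlasov equation: `A_{ξ₀}ᵀ ξ₀ = 0` and every solution with initial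
condition in `M₁(Z)` converges to `ξ₀`. -/
def IsUniqueGASEquilibrium (M : MeanFieldModel r) (ξ₀ : Fin r → ℝ) : Prop :=
  ξ₀ ∈ stdSimplex ℝ (Fin r) ∧
  (∀ i : Fin r, ∑ j, M.lam j i ξ₀ * ξ₀ j = 0) ∧
  ∀ η : ℝ → Fin r → ℝ, IsMVSolution M η → Tendsto η atTop (nhds ξ₀)

/-- The ω-limit set of a path: `Ω = ∩_{t>0} closure { μ(t') : t' ≥ t }`. -/
def omegaSet (η : ℝ → Fin r → ℝ) : Set (Fin r → ℝ) :=
  ⋂ t ∈ Ioi (0 : ℝ), closure (η '' Ici t)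

/-- Assumption (B): finitely many compact subsets `K 1, …, K l` of `M₁(Z)` such
that any two points of the same `K i` are equivalent, no point of `K i` is
equivalent to a point of `M₁(Z)` outside `K i`, and every ω-limit set of the
McKean–Vlasov equation is contained in some `K i`. -/
def AssumptionB (M : MeanFieldModel r) (l : ℕ) (K : Fin l → Set (Fin r → ℝ)) : Prop :=
  (∀ i, IsCompact (K i)) ∧
  (∀ i, K i ⊆ stdSimplex ℝ (Fin r)) ∧
  (∀ i, ∀ ν ∈ K i, ∀ ξ ∈ K i, VEquiv M ν ξ) ∧
  (∀ i, ∀ ν ∈ K i, ∀ ξ ∈ stdSimplex ℝ (Fin r), ξ ∉ K i → ¬ VEquiv M ν ξ) ∧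
  (∀ η : ℝ → Fin r → ℝ, IsMVSolution M η → ∃ i, omegaSet η ⊆ K i)

/-- `μ` is continuous and piecewise linear on `[0,T]`, with constant velocity on
each linear segment (linear interpolation between the breakpoints). -/
def PiecewiseLinear (μ : ℝ → Fin r → ℝ) (T : ℝ) : Prop :=
  ∃ (n : ℕ) (t : Fin (n + 1) → ℝ), StrictMono t ∧ t 0 = 0 ∧ t (Fin.last n) = T ∧
    ∀ k : Fin n, ∀ u ∈ Icc (t k.castSucc) (t k.succ), ∀ i : Fin r,
      μ u i = μ (t k.castSucc) i +
        (u - t k.castSucc) / (t k.succ - t k.castSucc) *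
          (μ (t k.succ) i - μ (t k.castSucc) i)

end

noncomputable section
namespace Stmt0Aux

variable {r : ℕ}

def mstep (m : (Fin r × Fin r) × ℝ) (w : Fin r → ℝ) : Fin r → ℝ :=
  fun x => w x + m.2 * ((if x = m.1.2 then 1 else 0) - (if x = m.1.1 then 1 else 0))

lemma sum_ind (z : Fin r) : (∑ x : Fin r, (if x = z then (1:ℝ) else 0)) = 1 := by simp

lemma mstep_mem {u v : Fin r} {w : Fin r → ℝ} (hw : w ∈ stdSimplex ℝ (Fin r))
    {a : ℝ} (ha : 0 ≤ a) (hau : a ≤ w u) :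
    mstep ((u, v), a) w ∈ stdSimplex ℝ (Fin r) := by
  obtain ⟨hnn, hsum⟩ := hw
  constructor
  · intro x
    have hx := hnn x
    show 0 ≤ w x + a * ((if x = v then (1:ℝ) else 0) - (if x = u then 1 else 0))
    by_cases hxv : x = v <;> by_cases hxu : x = u
    · rw [if_pos hxv, if_pos hxu]; linarith
    · rw [if_pos hxv, if_neg hxu]; linarith
    · rw [if_neg hxv, if_pos hxu]
      have hax : a ≤ w x := by rw [hxu]; exact hau
      linarith
    · rw [if_neg hxv, if_neg hxu]; linarith
  · have hval : ∀ x : Fin r, mstep ((u,v),a) w x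
        = w x + (a * (if x = v then (1:ℝ) else 0) - a * (if x = u then 1 else 0)) := by
      intro x; show w x + a * _ = _; ring
    rw [Finset.sum_congr rfl (fun x _ => hval x), Finset.sum_add_distrib,
      Finset.sum_sub_distrib, ← Finset.mul_sum, ← Finset.mul_sum, sum_ind, sum_ind, hsum]
    ring

/-- A valid chain of elementary moves from `ν` to `ξ`. -/
def Valid (M : MeanFieldModel r) : (Fin r → ℝ) → List ((Fin r × Fin r) × ℝ) → (Fin r → ℝ) → Prop
  | ν, [], ξ => ν = ξ
  | ν, m :: ms, ξ => m.1 ∈ M.E ∧ 0 ≤ m.2 ∧ mstep m ν ∈ stdSimplex ℝ (Fin r) ∧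
      Valid M (mstep m ν) ms ξ

lemma Valid.append {M : MeanFieldModel r} :
    ∀ {l1 : List ((Fin r × Fin r) × ℝ)} {ν κ ξ : Fin r → ℝ} {l2 : List ((Fin r × Fin r) × ℝ)},
      Valid M ν l1 κ → Valid M κ l2 ξ → Valid M ν (l1 ++ l2) ξ
  | [], ν, κ, ξ, l2, h1, h2 => by
      cases h1; simpa using h2
  | m :: tl, ν, κ, ξ, l2, h1, h2 => by
      obtain ⟨hE, ha, hs, hv⟩ := h1
      exact ⟨hE, ha, hs, Valid.append hv h2⟩

/-- A route in the directed graph. -/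
def IsRoute (M : MeanFieldModel r) : Fin r → List (Fin r × Fin r) → Fin r → Prop
  | u, [], v => u = v
  | u, e :: es, v => e ∈ M.E ∧ e.1 = u ∧ IsRoute M e.2 es v

lemma route_exists (M : MeanFieldModel r) (u v : Fin r) : ∃ es, IsRoute M u es v := by
  have h := M.irreducible u v
  induction h using Relation.ReflTransGen.head_induction_on with
  | refl => exact ⟨[], rfl⟩
  | head h _ ih =>
      obtain ⟨es, hes⟩ := ih
      exact ⟨_ :: es, ⟨h, rfl, hes⟩⟩

lemma transport (M : MeanFieldModel r) :
    ∀ (es : List (Fin r × Fin r)) (u v : Fin r), IsRoute M u es v →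
      ∀ (w : Fin r → ℝ), w ∈ stdSimplex ℝ (Fin r) → ∀ a : ℝ, 0 ≤ a → a ≤ w u →
      Valid M w (es.map (fun e => (e, a)))
        (fun x => w x + a * ((if x = v then 1 else 0) - (if x = u then 1 else 0)))
  | [], u, v, hr, w, hw, a, ha, hau => by
      cases hr
      show w = _
      funext x; simp
  | e :: es, u, v, hroute, w, hw, a, ha, hau => by
      obtain ⟨hE, he1, htl⟩ := hroute
      obtain ⟨u, x'⟩ := e
      cases he1
      have hux' : u ≠ x' := fun h => M.no_diag u (h ▸ hE)
      have hw' : mstep ((u, x'), a) w ∈ stdSimplex ℝ (Fin r) := mstep_mem hw ha hau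
      have hax' : a ≤ mstep ((u, x'), a) w x' := by
        have := hw.1 x'
        show a ≤ w x' + a * ((if x' = x' then (1:ℝ) else 0) - (if x' = u then 1 else 0))
        rw [if_pos rfl, if_neg (fun h => hux' h.symm)]
        linarith
      have ih := transport M es x' v htl (mstep ((u, x'), a) w) hw' a ha hax'
      refine ⟨hE, ha, hw', ?_⟩
      have : (fun x => mstep ((u, x'), a) w x
            + a * ((if x = v then (1:ℝ) else 0) - (if x = x' then 1 else 0)))
          = fun x => w x + a * ((if x = v then (1:ℝ) else 0) - (if x = u then 1 else 0)) := by
        funext x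
        show w x + a * ((if x = x' then (1:ℝ) else 0) - (if x = u then 1 else 0)) + _ = _
        ring
      rw [this] at ih
      exact ih

/-- Dirac mass at `z`. -/
def dirac0 (z : Fin r) : Fin r → ℝ := fun x => if x = z then 1 else 0

lemma dirac0_mem (z : Fin r) : dirac0 z ∈ stdSimplex ℝ (Fin r) := by
  constructor
  · intro x; unfold dirac0; split <;> norm_num
  · exact sum_ind z

lemma phase1 (M : MeanFieldModel r) (z0 : Fin r) (P : Fin r → List (Fin r × Fin r))
    (hP : ∀ v, IsRoute M v (P v) z0) :
    ∀ (l : List (Fin r)) (w : Fin r → ℝ), w ∈ stdSimplex ℝ (Fin r) →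
      (∀ x : Fin r, x ∉ l → x ≠ z0 → w x = 0) →
      ∃ ms, ms.length = (l.map (fun v => (P v).length)).sum ∧ Valid M w ms (dirac0 z0)
  | [], w, hw, hzero => by
      refine ⟨[], rfl, ?_⟩
      show w = dirac0 z0
      funext x
      by_cases hx : x = z0
      · subst hx
        have h1 : ∑ y : Fin r, w y = 1 := hw.2
        have h2 : ∀ y ∈ Finset.univ, y ≠ x → w y = 0 := by
          intro y _ hy; exact hzero y List.not_mem_nil hy
        rw [← Finset.sum_eq_single x (h2) (by simp)] at *
        simp [dirac0, h1]
      · simp [dirac0, hx, hzero x List.not_mem_nil hx]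
  | v :: l, w, hw, hzero => by
      have h1 := transport M (P v) v z0 (hP v) w hw (w v) (hw.1 v) le_rfl
      set w' : Fin r → ℝ :=
        fun x => w x + w v * ((if x = z0 then 1 else 0) - (if x = v then 1 else 0)) with hw'def
      have hw' : w' ∈ stdSimplex ℝ (Fin r) := mstep_mem hw (hw.1 v) le_rfl
      have hzero' : ∀ x : Fin r, x ∉ l → x ≠ z0 → w' x = 0 := by
        intro x hxl hxz
        by_cases hxv : x = v
        · subst hxv
          show w x + w x * ((if x = z0 then (1:ℝ) else 0) - (if x = x then 1 else 0)) = 0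
          rw [if_neg hxz, if_pos rfl]; ring
        · show w x + w v * ((if x = z0 then (1:ℝ) else 0) - (if x = v then 1 else 0)) = 0
          rw [if_neg hxz, if_neg hxv]
          have : w x = 0 := hzero x (by simp [hxl, hxv]) hxz
          rw [this]; ring
      obtain ⟨ms2, hlen2, hv2⟩ := phase1 M z0 P hP l w' hw' hzero'
      refine ⟨(P v).map (fun e => (e, w v)) ++ ms2, ?_, Valid.append h1 hv2⟩
      simp [hlen2]

lemma phase2 (M : MeanFieldModel r) (z0 : Fin r) (Q : Fin r → List (Fin r × Fin r))
    (hQ : ∀ v, IsRoute M z0 (Q v) v) (ξ : Fin r → ℝ) (hξ : ξ ∈ stdSimplex ℝ (Fin r)) :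
    ∀ (l : List (Fin r)), l.Nodup → ∀ (w : Fin r → ℝ), w ∈ stdSimplex ℝ (Fin r) →
      (∀ x : Fin r, x ∈ l → x ≠ z0 → w x = 0) →
      (∀ x : Fin r, x ∉ l → x ≠ z0 → w x = ξ x) →
      ∃ ms, ms.length = (l.map (fun v => (Q v).length)).sum ∧ Valid M w ms ξ
  | [], _, w, hw, _, hdone => by
      refine ⟨[], rfl, ?_⟩
      show w = ξ
      funext x
      by_cases hx : x = z0
      · subst hx
        have h2 : ∀ y ∈ Finset.univ.erase x, w y = ξ y := by
          intro y hy
          exact hdone y List.not_mem_nil (Finset.ne_of_mem_erase hy)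
      -- sum over univ = w x + sum over erase
        have hsw := hw.2
        have hsξ := hξ.2
        rw [← Finset.add_sum_erase Finset.univ w (Finset.mem_univ x)] at hsw
        rw [← Finset.add_sum_erase Finset.univ ξ (Finset.mem_univ x)] at hsξ
        rw [Finset.sum_congr rfl h2] at hsw
        linarith
      · exact hdone x List.not_mem_nil hx
  | v :: l, hnd, w, hw, hzero, hdone => by
      have hndl : l.Nodup := (List.nodup_cons.mp hnd).2
      have hvl : v ∉ l := (List.nodup_cons.mp hnd).1
      by_cases hvz : v = z0
      · -- skip: move amount 0
        subst hvz
        have h1 := transport M (Q v) v v (hQ v) w hw 0 le_rfl (hw.1 v)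
        have heq : (fun x => w x + 0 * ((if x = v then (1:ℝ) else 0) - (if x = v then 1 else 0)))
            = w := by funext x; ring
        rw [heq] at h1
        obtain ⟨ms2, hlen2, hv2⟩ := phase2 M v Q hQ ξ hξ l hndl w hw
          (fun x hx hxz => hzero x (by simp [hx]) hxz)
          (fun x hx hxz => hdone x (fun hc => by
            rcases List.mem_cons.mp hc with h | h
            · exact hxz h
            · exact hx h) hxz)
        exact ⟨(Q v).map (fun e => (e, 0)) ++ ms2, by simp [hlen2], Valid.append h1 hv2⟩
      · -- move ξ v from z0 to v
        have hfeas : ξ v ≤ w z0 := by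
          -- w z0 = 1 - ∑_{x ≠ z0} w x  and  w x ∈ {0, ξ x}
          have hsw := hw.2
          have hsξ := hξ.2
          rw [← Finset.add_sum_erase Finset.univ w (Finset.mem_univ z0)] at hsw
          rw [← Finset.add_sum_erase Finset.univ ξ (Finset.mem_univ z0)] at hsξ
          -- split erase into those in l∪{v} (w = 0) and others (w = ξ); compare with ξ sum
          have key : ∑ x ∈ Finset.univ.erase z0, w x
              ≤ (∑ x ∈ Finset.univ.erase z0, ξ x) - ξ v := by
            have hsub : ∀ x ∈ Finset.univ.erase z0, w x ≤ (if x = v then 0 else ξ x) := by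
              intro x hx
              have hxz := Finset.ne_of_mem_erase hx
              by_cases hxvl : x ∈ v :: l
              · rw [hzero x hxvl hxz]
                by_cases hxv : x = v
                · rw [if_pos hxv]
                · rw [if_neg hxv]; exact hξ.1 x
              · have hxv : ¬ x = v := fun h => hxvl (by simp [h])
                rw [if_neg hxv, hdone x hxvl hxz]
            calc ∑ x ∈ Finset.univ.erase z0, w x
                ≤ ∑ x ∈ Finset.univ.erase z0, (if x = v then 0 else ξ x) :=
                  Finset.sum_le_sum hsub
              _ = (∑ x ∈ Finset.univ.erase z0, ξ x) - ξ v := by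
                  have hv' : v ∈ Finset.univ.erase z0 := Finset.mem_erase.mpr ⟨hvz, Finset.mem_univ v⟩
                  rw [← Finset.add_sum_erase _ _ hv', ← Finset.add_sum_erase _ ξ hv', if_pos rfl]
                  have : ∀ x ∈ (Finset.univ.erase z0).erase v, (if x = v then (0:ℝ) else ξ x) = ξ x := by
                    intro x hx
                    rw [if_neg (Finset.ne_of_mem_erase hx)]
                  rw [Finset.sum_congr rfl this]
                  ring
          have hz0 := hξ.1 z0
          linarith
        have h1 := transport M (Q v) z0 v (hQ v) w hw (ξ v) (hξ.1 v) hfeas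
        set w' : Fin r → ℝ :=
          fun x => w x + ξ v * ((if x = v then 1 else 0) - (if x = z0 then 1 else 0)) with hw'def
        have hw'mem : w' ∈ stdSimplex ℝ (Fin r) := mstep_mem hw (hξ.1 v) hfeas
        have hzero' : ∀ x : Fin r, x ∈ l → x ≠ z0 → w' x = 0 := by
          intro x hx hxz
          have hxv : x ≠ v := fun h => hvl (h ▸ hx)
          show w x + ξ v * ((if x = v then (1:ℝ) else 0) - (if x = z0 then 1 else 0)) = 0
          rw [if_neg hxv, if_neg hxz, hzero x (List.mem_cons_of_mem v hx) hxz]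
          ring
        have hdone' : ∀ x : Fin r, x ∉ l → x ≠ z0 → w' x = ξ x := by
          intro x hx hxz
          show w x + ξ v * ((if x = v then (1:ℝ) else 0) - (if x = z0 then 1 else 0)) = ξ x
          rw [if_neg hxz]
          by_cases hxv : x = v
          · subst hxv
            rw [if_pos rfl, hzero x List.mem_cons_self hxz]
            ring
          · rw [if_neg hxv, hdone x (fun h => by
              rcases List.mem_cons.mp h with h | h
              · exact hxv h
              · exact hx h) hxz]
            ring
        obtain ⟨ms2, hlen2, hv2⟩ := phase2 M z0 Q hQ ξ hξ l hndl w' hw'mem hzero' hdone'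
        exact ⟨(Q v).map (fun e => (e, ξ v)) ++ ms2, by simp [hlen2], Valid.append h1 hv2⟩

lemma plan (M : MeanFieldModel r) (hr : 0 < r) :
    ∃ N : ℕ, (1 < r → 0 < N) ∧ ∀ ν ∈ stdSimplex ℝ (Fin r), ∀ ξ ∈ stdSimplex ℝ (Fin r),
      ∃ ms : List ((Fin r × Fin r) × ℝ), ms.length = N ∧ Valid M ν ms ξ := by
  set z0 : Fin r := ⟨0, hr⟩ with hz0
  choose P hP using fun v => route_exists M v z0
  choose Q hQ using fun v => route_exists M z0 v
  refine ⟨((List.finRange r).map (fun v => (P v).length)).sum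
        + ((List.finRange r).map (fun v => (Q v).length)).sum, ?_, ?_⟩
  · intro h2
    have hv1 : (⟨1, h2⟩ : Fin r) ≠ z0 := by
      intro h
      have := congrArg Fin.val h
      simp [hz0] at this
    have hlen : (P ⟨1, h2⟩).length ≠ 0 := by
      intro h0
      rw [List.length_eq_zero_iff] at h0
      have := hP ⟨1, h2⟩
      rw [h0] at this
      exact hv1 this
    have hmem : (P ⟨1, h2⟩).length ∈ (List.finRange r).map (fun v => (P v).length) :=
      List.mem_map_of_mem (List.mem_finRange _)
    have hsum : ((List.finRange r).map (fun v => (P v).length)).sum ≠ 0 := by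
      intro h0
      rw [List.sum_eq_zero_iff] at h0
      exact hlen (h0 _ hmem)
    omega
  · intro ν hν ξ hξ
    obtain ⟨ms1, hl1, h1⟩ := phase1 M z0 P hP (List.finRange r) ν hν
      (fun x hx _ => absurd (List.mem_finRange x) hx)
    obtain ⟨ms2, hl2, h2⟩ := phase2 M z0 Q hQ ξ hξ (List.finRange r) (List.nodup_finRange r)
      (dirac0 z0) (dirac0_mem z0) (fun x _ hxz => by simp [dirac0, hxz])
      (fun x hx _ => absurd (List.mem_finRange x) hx)
    exact ⟨ms1 ++ ms2, by simp [hl1, hl2], Valid.append h1 h2⟩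

lemma valid_to_fun (M : MeanFieldModel r) (hr : 0 < r) :
    ∀ (ms : List ((Fin r × Fin r) × ℝ)) (ν ξ : Fin r → ℝ), ν ∈ stdSimplex ℝ (Fin r) →
      Valid M ν ms ξ →
      ∃ (e : ℕ → Fin r × Fin r) (a : ℕ → ℝ) (w : ℕ → Fin r → ℝ),
        (∀ k < ms.length, e k ∈ M.E ∧ 0 ≤ a k ∧ w (k+1) = mstep (e k, a k) (w k)) ∧
        (∀ k ≤ ms.length, w k ∈ stdSimplex ℝ (Fin r)) ∧ w 0 = ν ∧ w ms.length = ξ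
  | [], ν, ξ, hν, hv =>
      ⟨fun _ => (⟨0, hr⟩, ⟨0, hr⟩), fun _ => 0, fun _ => ν,
        fun k hk => absurd hk (Nat.not_lt_zero k), fun _ _ => hν, rfl, hv⟩
  | m :: tl, ν, ξ, hν, hv => by
      obtain ⟨hE, ha, hs, htl⟩ := hv
      obtain ⟨e', a', w', hstep', hmem', hw0', hwlast'⟩ :=
        valid_to_fun M hr tl (mstep m ν) ξ hs htl
      refine ⟨fun k => match k with | 0 => m.1 | k+1 => e' k,
              fun k => match k with | 0 => m.2 | k+1 => a' k,
              fun k => match k with | 0 => ν | k+1 => w' k, ?_, ?_, rfl, hwlast'⟩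
      · intro k hk
        match k with
        | 0 => exact ⟨hE, ha, by show w' 0 = _; rw [hw0']⟩
        | k+1 => exact hstep' k (by simpa using hk)
      · intro k hk
        match k with
        | 0 => exact hν
        | k+1 => exact hmem' k (by simpa using hk)

/-! ### The piecewise-linear path and its rate matrix -/

def δf (T : ℝ) (N : ℕ) : ℝ := T / N

def slopef (T : ℝ) (N : ℕ) (e : ℕ → Fin r × Fin r) (a : ℕ → ℝ) (k : ℕ) (i : Fin r) : ℝ :=
  a k / δf T N * ((if i = (e k).2 then 1 else 0) - (if i = (e k).1 then 1 else 0))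

def clipf (T : ℝ) (N : ℕ) (k : ℕ) (t : ℝ) : ℝ := min (max (t - k * δf T N) 0) (δf T N)

def pathf (T : ℝ) (N : ℕ) (e : ℕ → Fin r × Fin r) (a : ℕ → ℝ) (ν : Fin r → ℝ)
    (t : ℝ) : Fin r → ℝ :=
  fun i => ν i + ∑ k ∈ Finset.range N, slopef T N e a k i * clipf T N k t

section Core

variable (M : MeanFieldModel r) (T : ℝ) (N : ℕ) (e : ℕ → Fin r × Fin r) (a : ℕ → ℝ)
  (w : ℕ → Fin r → ℝ)

lemma clip_eq_delta {T : ℝ} {N : ℕ} (hδ : 0 ≤ δf T N) {k : ℕ} {t : ℝ}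
    (h : ((k : ℝ) + 1) * δf T N ≤ t) : clipf T N k t = δf T N := by
  unfold clipf
  have h1 : δf T N ≤ t - k * δf T N := by nlinarith
  rw [max_eq_left (by linarith), min_eq_right h1]

lemma clip_eq_zero {T : ℝ} {N : ℕ} (hδ : 0 ≤ δf T N) {k : ℕ} {t : ℝ}
    (h : t ≤ (k : ℝ) * δf T N) : clipf T N k t = 0 := by
  unfold clipf
  rw [max_eq_right (by linarith), min_eq_left hδ]

lemma clip_mid {T : ℝ} {N : ℕ} {k : ℕ} {t : ℝ}
    (h1 : (k : ℝ) * δf T N ≤ t) (h2 : t ≤ ((k : ℝ) + 1) * δf T N) :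
    clipf T N k t = t - k * δf T N := by
  unfold clipf
  rw [max_eq_left (by linarith), min_eq_left (by nlinarith)]

lemma wsum (hδ : δf T N ≠ 0)
    (hstep : ∀ k < N, w (k+1) = mstep (e k, a k) (w k)) :
    ∀ k, k ≤ N → ∀ i, w k i = w 0 i + ∑ m ∈ Finset.range k, slopef T N e a m i * δf T N := by
  intro k
  induction k with
  | zero => intro _ i; simp
  | succ k ih =>
      intro hk i
      have hk' : k < N := hk
      rw [hstep k hk']
      show w k i + a k * _ = _
      rw [ih (le_of_lt hk') i, Finset.sum_range_succ]
      have : slopef T N e a k i * δf T N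
          = a k * ((if i = (e k).2 then 1 else 0) - (if i = (e k).1 then 1 else 0)) := by
        unfold slopef
        field_simp
      rw [this]
      ring

lemma master (hT : 0 < T) (hN : 0 < N) (hδ : 0 < δf T N)
    (hstep : ∀ k < N, w (k+1) = mstep (e k, a k) (w k)) :
    ∀ k < N, ∀ t : ℝ, (k : ℝ) * δf T N ≤ t → t ≤ ((k : ℝ) + 1) * δf T N → ∀ i,
      pathf T N e a (w 0) t i = w k i + slopef T N e a k i * (t - k * δf T N) := by
  intro k hk t ht1 ht2 i
  unfold pathf
  have hsub : Finset.range (k+1) ⊆ Finset.range N := Finset.range_subset_range.mpr hk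
  have hvanish : ∀ m ∈ Finset.range N, m ∉ Finset.range (k+1) →
      slopef T N e a m i * clipf T N m t = 0 := by
    intro m _ hm
    have hkm : k + 1 ≤ m := by
      simp only [Finset.mem_range, not_lt] at hm
      exact hm
    have : t ≤ (m : ℝ) * δf T N := by
      calc t ≤ ((k : ℝ) + 1) * δf T N := ht2
        _ ≤ (m : ℝ) * δf T N := by
            have : ((k : ℝ) + 1) ≤ (m : ℝ) := by exact_mod_cast hkm
            nlinarith
    rw [clip_eq_zero hδ.le this, mul_zero]
  rw [← Finset.sum_subset hsub hvanish, Finset.sum_range_succ, clip_mid ht1 ht2]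
  have hfull : ∀ m ∈ Finset.range k, slopef T N e a m i * clipf T N m t
      = slopef T N e a m i * δf T N := by
    intro m hm
    have hmk : m + 1 ≤ k := Finset.mem_range.mp hm
    rw [clip_eq_delta hδ.le]
    calc ((m : ℝ) + 1) * δf T N ≤ (k : ℝ) * δf T N := by
          have : ((m : ℝ) + 1) ≤ (k : ℝ) := by exact_mod_cast hmk
          nlinarith
      _ ≤ t := ht1
  rw [Finset.sum_congr rfl hfull]
  have hws := wsum T N e a w hδ.ne' hstep k hk.le i
  linarith

lemma cover (hT : 0 < T) (hN : 0 < N) (hδ : 0 < δf T N) :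
    ∀ t : ℝ, 0 ≤ t → t ≤ T → ∃ k < N, (k : ℝ) * δf T N ≤ t ∧ t ≤ ((k : ℝ) + 1) * δf T N := by
  intro t ht0 htT
  have hNδ : (N : ℝ) * δf T N = T := by
    unfold δf
    field_simp
  by_cases hj : ⌊t / δf T N⌋₊ < N
  · refine ⟨⌊t / δf T N⌋₊, hj, ?_, ?_⟩
    · rw [← le_div_iff₀ hδ] at *
      · exact Nat.floor_le (div_nonneg ht0 hδ.le)
    · rw [← div_le_iff₀ hδ]
      exact (Nat.lt_floor_add_one (t / δf T N)).le
  · have hN' : (N : ℝ) ≤ t / δf T N := by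
      rw [← Nat.le_floor_iff (div_nonneg ht0 hδ.le)] at *
      omega
    have : T ≤ t := by
      rw [← hNδ]
      calc (N : ℝ) * δf T N ≤ t / δf T N * δf T N := by nlinarith
        _ = t := by field_simp
    have htT' : t = T := le_antisymm htT this
    refine ⟨N - 1, by omega, ?_, ?_⟩
    · have : ((N - 1 : ℕ) : ℝ) ≤ (N : ℝ) := by
        exact_mod_cast Nat.sub_le N 1
      subst htT'
      nlinarith
    · have : ((N - 1 : ℕ) : ℝ) + 1 = (N : ℝ) := by
        have := Nat.succ_pred_eq_of_pos hN
        exact_mod_cast congrArg (Nat.cast : ℕ → ℝ) this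
      rw [this, hNδ, htT']

end Core

def rhof (T : ℝ) (N : ℕ) (e : ℕ → Fin r × Fin r) (a : ℕ → ℝ) (ν : Fin r → ℝ)
    (k : ℕ) (t : ℝ) : ℝ :=
  if 0 < pathf T N e a ν t (e k).1 then a k / δf T N / pathf T N e a ν t (e k).1 else 0

def Loff (T : ℝ) (N : ℕ) (e : ℕ → Fin r × Fin r) (a : ℕ → ℝ) (ν : Fin r → ℝ)
    (t : ℝ) (i j : Fin r) : ℝ :=
  ∑ k ∈ Finset.range N,
    (Ico ((k : ℝ) * δf T N) (((k : ℝ) + 1) * δf T N)).indicator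
      (fun s => if (i, j) = e k then rhof T N e a ν k s else 0) t

def Lfun (T : ℝ) (N : ℕ) (e : ℕ → Fin r × Fin r) (a : ℕ → ℝ) (ν : Fin r → ℝ)
    (t : ℝ) (i j : Fin r) : ℝ :=
  if i = j then -∑ j' ∈ Finset.univ.filter (fun j' => j' ≠ i), Loff T N e a ν t i j'
  else Loff T N e a ν t i j

def Df (T : ℝ) (N : ℕ) (e : ℕ → Fin r × Fin r) (a : ℕ → ℝ) (t : ℝ) (i : Fin r) : ℝ :=
  ∑ k ∈ Finset.range N,
    (Ico ((k : ℝ) * δf T N) (((k : ℝ) + 1) * δf T N)).indicator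
      (fun _ => slopef T N e a k i) t

section Core2

variable {M : MeanFieldModel r} {T : ℝ} {N : ℕ} {e : ℕ → Fin r × Fin r} {a : ℕ → ℝ}
  {w : ℕ → Fin r → ℝ} {ν : Fin r → ℝ}

lemma seg_unique (hδ : 0 < δf T N) {k m : ℕ} {t : ℝ}
    (ht1 : (k : ℝ) * δf T N ≤ t) (ht2 : t < ((k : ℝ) + 1) * δf T N)
    (hm : t ∈ Ico ((m : ℝ) * δf T N) (((m : ℝ) + 1) * δf T N)) : m = k := by
  obtain ⟨h1, h2⟩ := hm
  by_contra hmk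
  rcases lt_or_gt_of_ne hmk with h | h
  · have : ((m : ℝ) + 1) ≤ (k : ℝ) := by exact_mod_cast h
    nlinarith
  · have : ((k : ℝ) + 1) ≤ (m : ℝ) := by exact_mod_cast h
    nlinarith

lemma Loff_eval (hδ : 0 < δf T N) {k : ℕ} (hk : k < N) {t : ℝ}
    (ht1 : (k : ℝ) * δf T N ≤ t) (ht2 : t < ((k : ℝ) + 1) * δf T N) (i j : Fin r) :
    Loff T N e a ν t i j = if (i, j) = e k then rhof T N e a ν k t else 0 := by
  unfold Loff
  rw [Finset.sum_eq_single k]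
  · rw [Set.indicator_of_mem (Set.mem_Ico.mpr ⟨ht1, ht2⟩)]
  · intro m _ hmk
    rw [Set.indicator_of_notMem]
    intro hmem
    exact hmk (seg_unique hδ ht1 ht2 hmem)
  · intro h
    exact absurd (Finset.mem_range.mpr hk) h

lemma Df_eval (hδ : 0 < δf T N) {k : ℕ} (hk : k < N) {t : ℝ}
    (ht1 : (k : ℝ) * δf T N ≤ t) (ht2 : t < ((k : ℝ) + 1) * δf T N) (i : Fin r) :
    Df T N e a t i = slopef T N e a k i := by
  unfold Df
  rw [Finset.sum_eq_single k]
  · rw [Set.indicator_of_mem (Set.mem_Ico.mpr ⟨ht1, ht2⟩)]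
  · intro m _ hmk
    rw [Set.indicator_of_notMem]
    intro hmem
    exact hmk (seg_unique hδ ht1 ht2 hmem)
  · intro h
    exact absurd (Finset.mem_range.mpr hk) h

lemma pathf_continuous (i : Fin r) : Continuous fun t => pathf T N e a ν t i := by
  unfold pathf
  refine continuous_const.add (continuous_finset_sum _ fun k _ => continuous_const.mul ?_)
  exact ((continuous_id.sub continuous_const).max continuous_const).min continuous_const

lemma pos_path (hT : 0 < T) (hN : 0 < N) (hδ : 0 < δf T N)
    (hstep : ∀ k < N, w (k+1) = mstep (e k, a k) (w k))
    (hw : ∀ k ≤ N, w k ∈ stdSimplex ℝ (Fin r))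
    (hne : ∀ k < N, (e k).1 ≠ (e k).2) :
    ∀ k < N, ∀ t : ℝ, (k : ℝ) * δf T N ≤ t → t ≤ ((k : ℝ) + 1) * δf T N →
      a k / δf T N * (((k : ℝ) + 1) * δf T N - t) ≤ pathf T N e a (w 0) t (e k).1 := by
  intro k hk t ht1 ht2
  have hm := master T N e a w hT hN hδ hstep k hk t ht1 ht2 (e k).1
  rw [hm]
  have h1 : w (k+1) (e k).1 = w k (e k).1 - a k := by
    rw [hstep k hk]
    show w k (e k).1 + a k * ((if (e k).1 = (e k).2 then (1:ℝ) else 0)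
      - (if (e k).1 = (e k).1 then 1 else 0)) = _
    rw [if_neg (hne k hk), if_pos rfl]
    ring
  have h2 : (0:ℝ) ≤ w (k+1) (e k).1 := (hw (k+1) hk).1 _
  have hslope : slopef T N e a k (e k).1 = -(a k / δf T N) := by
    unfold slopef
    rw [if_neg (hne k hk), if_pos rfl]
    ring
  rw [hslope]
  have hcalc : a k / δf T N * (((k : ℝ) + 1) * δf T N - t)
      = a k - a k / δf T N * (t - k * δf T N) := by
    field_simp
    ring
  rw [hcalc]
  linarith

lemma rho_mul (hT : 0 < T) (hN : 0 < N) (hδ : 0 < δf T N)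
    (hstep : ∀ k < N, w (k+1) = mstep (e k, a k) (w k))
    (hw : ∀ k ≤ N, w k ∈ stdSimplex ℝ (Fin r))
    (hne : ∀ k < N, (e k).1 ≠ (e k).2)
    (ha : ∀ k < N, 0 ≤ a k)
    {k : ℕ} (hk : k < N) {t : ℝ} (ht1 : (k : ℝ) * δf T N ≤ t)
    (ht2 : t < ((k : ℝ) + 1) * δf T N) :
    rhof T N e a (w 0) k t * pathf T N e a (w 0) t (e k).1 = a k / δf T N := by
  unfold rhof
  by_cases hpos : 0 < pathf T N e a (w 0) t (e k).1
  · rw [if_pos hpos]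
    field_simp
  · rw [if_neg hpos, zero_mul]
    rcases eq_or_lt_of_le (ha k hk) with h | h
    · rw [← h, zero_div]
    · exfalso
      apply hpos
      calc (0:ℝ) < a k / δf T N * (((k : ℝ) + 1) * δf T N - t) := by
            apply mul_pos (div_pos h hδ)
            linarith
        _ ≤ _ := pos_path hT hN hδ hstep hw hne k hk t ht1 ht2.le

lemma drift_eq (hT : 0 < T) (hN : 0 < N) (hδ : 0 < δf T N)
    (hstep : ∀ k < N, w (k+1) = mstep (e k, a k) (w k))
    (hw : ∀ k ≤ N, w k ∈ stdSimplex ℝ (Fin r))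
    (hne : ∀ k < N, (e k).1 ≠ (e k).2)
    (ha : ∀ k < N, 0 ≤ a k)
    {k : ℕ} (hk : k < N) {t : ℝ} (ht1 : (k : ℝ) * δf T N ≤ t)
    (ht2 : t < ((k : ℝ) + 1) * δf T N) (i : Fin r) :
    (∑ j, Lfun T N e a (w 0) t j i * pathf T N e a (w 0) t j) = slopef T N e a k i := by
  rcases hek : e k with ⟨x, y⟩
  have hxy : x ≠ y := by
    have := hne k hk
    rw [hek] at this
    exact this
  have hkey : rhof T N e a (w 0) k t * pathf T N e a (w 0) t x = a k / δf T N := by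
    have h := rho_mul hT hN hδ hstep hw hne ha hk ht1 ht2
    rw [hek] at h
    exact h
  have hLoff : ∀ i' j' : Fin r, Loff T N e a (w 0) t i' j'
      = if i' = x ∧ j' = y then rhof T N e a (w 0) k t else 0 := by
    intro i' j'
    rw [Loff_eval hδ hk ht1 ht2]
    simp only [hek, Prod.mk.injEq]
  have hdiagsum : ∀ i' : Fin r,
      (∑ j' ∈ Finset.univ.filter (fun j' => j' ≠ i'), Loff T N e a (w 0) t i' j')
      = if i' = x then rhof T N e a (w 0) k t else 0 := by
    intro i'
    rw [Finset.sum_congr rfl (fun j' _ => hLoff i' j')]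
    by_cases h2 : i' = x
    · have hc : ∀ j' ∈ Finset.univ.filter (fun j' => j' ≠ i'),
          (if i' = x ∧ j' = y then rhof T N e a (w 0) k t else 0)
          = if j' = y then rhof T N e a (w 0) k t else 0 := by
        intro j' _
        by_cases h3 : j' = y
        · rw [if_pos ⟨h2, h3⟩, if_pos h3]
        · rw [if_neg (fun hcc => h3 hcc.2), if_neg h3]
      rw [Finset.sum_congr rfl hc, Finset.sum_ite_eq' _ y, if_pos, if_pos h2]
      rw [Finset.mem_filter]
      refine ⟨Finset.mem_univ y, fun hcc => hxy ?_⟩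
      rw [h2] at hcc
      rw [hcc]
    · rw [if_neg h2, Finset.sum_eq_zero]
      intro j' _
      rw [if_neg (fun hcc => h2 hcc.1)]
  have hterm : ∀ j, Lfun T N e a (w 0) t j i * pathf T N e a (w 0) t j
      = if j = x then a k / δf T N * ((if i = y then 1 else 0) - (if i = x then 1 else 0))
        else 0 := by
    intro j
    by_cases hji : j = i
    · subst hji
      have hd : Lfun T N e a (w 0) t j j
          = -(if j = x then rhof T N e a (w 0) k t else 0) := by
        unfold Lfun
        rw [if_pos rfl, hdiagsum j]
      rw [hd]
      by_cases h2 : j = x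
      · rw [if_pos h2, if_pos h2]
        have h3 : ¬ j = y := fun hc => hxy (h2.symm.trans hc)
        rw [if_neg h3, if_pos h2]
        have hp : pathf T N e a (w 0) t j = pathf T N e a (w 0) t x := by rw [h2]
        rw [neg_mul, hp, hkey]
        ring
      · rw [if_neg h2, if_neg h2, neg_zero, zero_mul]
    · have hoffd : Lfun T N e a (w 0) t j i = Loff T N e a (w 0) t j i := by
        unfold Lfun
        rw [if_neg hji]
      rw [hoffd, hLoff]
      by_cases h2 : j = x
      · by_cases h3 : i = y
        · rw [if_pos ⟨h2, h3⟩, if_pos h2, if_pos h3]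
          have h4 : ¬ i = x := fun hc => hji (h2.trans hc.symm)
          rw [if_neg h4]
          have hp : pathf T N e a (w 0) t j = pathf T N e a (w 0) t x := by rw [h2]
          rw [hp, hkey]
          ring
        · rw [if_neg (fun hcc => h3 hcc.2), if_pos h2, if_neg h3, zero_mul]
          have h4 : ¬ i = x := fun hc => hji (h2.trans hc.symm)
          rw [if_neg h4]
          ring
      · rw [if_neg (fun hcc => h2 hcc.1), if_neg h2, zero_mul]
  rw [Finset.sum_congr rfl (fun j _ => hterm j), Finset.sum_ite_eq' Finset.univ x,
    if_pos (Finset.mem_univ x)]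
  unfold slopef
  rw [hek]

lemma Loff_measurable (i j : Fin r) : Measurable fun t => Loff T N e a ν t i j := by
  apply Finset.measurable_sum
  intro k _
  apply Measurable.indicator _ measurableSet_Ico
  by_cases h : (i, j) = e k
  · simp only [if_pos h]
    exact Measurable.ite
      (measurableSet_lt measurable_const (pathf_continuous (e k).1).measurable)
      (measurable_const.div (pathf_continuous (e k).1).measurable) measurable_const
  · simp only [if_neg h]
    exact measurable_const

lemma Lfun_measurable (i j : Fin r) : Measurable fun t => Lfun T N e a ν t i j := by
  unfold Lfun
  by_cases h : i = j
  · simp only [if_pos h]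
    exact (Finset.measurable_sum _ fun j' _ => Loff_measurable i j').neg
  · simp only [if_neg h]
    exact Loff_measurable i j

lemma isRateMatrix (M : MeanFieldModel r) (hδ : 0 < δf T N)
    (hEk : ∀ k < N, e k ∈ M.E) (ha : ∀ k < N, 0 ≤ a k) :
    IsRateMatrix M (Lfun T N e a ν) := by
  refine ⟨fun i j => Lfun_measurable i j, ?_, ?_, ?_⟩
  · intro t i j hij
    show (0:ℝ) ≤ if i = j then _ else Loff T N e a ν t i j
    rw [if_neg hij]
    apply Finset.sum_nonneg
    intro k hk
    apply Set.indicator_nonneg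
    intro s _
    split
    · unfold rhof
      split
      · exact div_nonneg (div_nonneg (ha k (Finset.mem_range.mp hk)) hδ.le) (by linarith)
      · exact le_rfl
    · exact le_rfl
  · intro t i j hij hnotE
    show (if i = j then _ else Loff T N e a ν t i j) = 0
    rw [if_neg hij]
    apply Finset.sum_eq_zero
    intro k hk
    have hne : (i, j) ≠ e k := fun h => hnotE (h ▸ hEk k (Finset.mem_range.mp hk))
    rw [Set.indicator_apply]
    rw [if_neg hne]
    simp
  · intro t i
    show (if i = i then -∑ j' ∈ Finset.univ.filter (fun j' => j' ≠ i), Loff T N e a ν t i j'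
      else _) = _
    rw [if_pos rfl]
    congr 1
    apply Finset.sum_congr rfl
    intro j hj
    rw [Finset.mem_filter] at hj
    show Loff T N e a ν t i j = Lfun T N e a ν t i j
    unfold Lfun
    rw [if_neg (fun h => hj.2 h.symm)]

lemma Df_integrable (i : Fin r) : Integrable (fun t => Df T N e a t i) := by
  apply integrable_finset_sum
  intro k _
  rw [integrable_indicator_iff measurableSet_Ico]
  exact integrableOn_const measure_Ico_lt_top.ne

lemma path0 (hδ : 0 < δf T N) : pathf T N e a ν 0 = ν := by
  funext i
  unfold pathf
  rw [Finset.sum_eq_zero, add_zero]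
  intro k _
  rw [clip_eq_zero hδ.le (by positivity), mul_zero]

lemma Df_integral_seg (hδ : 0 < δf T N) {k : ℕ} (hk : k < N) {u : ℝ}
    (hu1 : (k : ℝ) * δf T N ≤ u) (hu2 : u ≤ ((k : ℝ) + 1) * δf T N) (i : Fin r) :
    ∫ s in Ioc ((k : ℝ) * δf T N) u, Df T N e a s i
      = slopef T N e a k i * (u - (k : ℝ) * δf T N) := by
  have hae : ∀ᵐ s, s ∈ Ioc ((k : ℝ) * δf T N) u → Df T N e a s i = slopef T N e a k i := by
    have h0 : (volume : Measure ℝ) {(((k : ℝ) + 1) * δf T N)} = 0 := measure_singleton _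
    filter_upwards [compl_mem_ae_iff.mpr h0] with s hs hmem
    exact Df_eval hδ hk hmem.1.le (lt_of_le_of_ne (le_trans hmem.2 hu2) hs) i
  rw [setIntegral_congr_ae measurableSet_Ioc hae, setIntegral_const, Real.volume_real_Ioc_of_le hu1,
    smul_eq_mul]
  ring

lemma Df_integral (hδ : 0 < δf T N) :
    ∀ k ≤ N, ∀ i, ∫ s in Ioc (0:ℝ) ((k : ℝ) * δf T N), Df T N e a s i
      = ∑ m ∈ Finset.range k, slopef T N e a m i * δf T N := by
  intro k
  induction k with
  | zero => intro _ i; simp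
  | succ k ih =>
      intro hk i
      have hk' : k < N := hk
      have hcast : ((k + 1 : ℕ) : ℝ) = (k : ℝ) + 1 := by push_cast; ring
      have h0k : (0:ℝ) ≤ (k : ℝ) * δf T N := by positivity
      have hkk1 : (k : ℝ) * δf T N ≤ ((k : ℝ) + 1) * δf T N := by nlinarith
      rw [hcast, ← Ioc_union_Ioc_eq_Ioc h0k hkk1,
        setIntegral_union (Ioc_disjoint_Ioc_of_le le_rfl) measurableSet_Ioc
          (Df_integrable i).integrableOn (Df_integrable i).integrableOn,
        ih (le_of_lt hk') i, Df_integral_seg hδ hk' hkk1 le_rfl i, Finset.sum_range_succ]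
      ring

lemma cover2 (hT : 0 < T) (hN : 0 < N) (hδ : 0 < δf T N) :
    ∀ t : ℝ, 0 ≤ t → t < T → ∃ k < N, (k : ℝ) * δf T N ≤ t ∧ t < ((k : ℝ) + 1) * δf T N := by
  intro t ht0 htT
  have hNδ : (N : ℝ) * δf T N = T := by
    unfold δf
    field_simp
  refine ⟨⌊t / δf T N⌋₊, ?_, ?_, ?_⟩
  · rw [Nat.floor_lt (div_nonneg ht0 hδ.le)]
    rw [div_lt_iff₀ hδ, hNδ]  -- t/δ < N ↔ t < N*δ = T
    exact htT
  · rw [← le_div_iff₀ hδ]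
    exact Nat.floor_le (div_nonneg ht0 hδ.le)
  · rw [← div_lt_iff₀ hδ]
    exact Nat.lt_floor_add_one (t / δf T N)

lemma drift_eq_Df (hT : 0 < T) (hN : 0 < N) (hδ : 0 < δf T N)
    (hstep : ∀ k < N, w (k+1) = mstep (e k, a k) (w k))
    (hw : ∀ k ≤ N, w k ∈ stdSimplex ℝ (Fin r))
    (hne : ∀ k < N, (e k).1 ≠ (e k).2)
    (ha : ∀ k < N, 0 ≤ a k) {s : ℝ} (hs0 : 0 ≤ s) (hsT : s < T) (i : Fin r) :
    (∑ j, Lfun T N e a (w 0) s j i * pathf T N e a (w 0) s j) = Df T N e a s i := by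
  obtain ⟨k, hk, h1, h2⟩ := cover2 hT hN hδ s hs0 hsT
  rw [drift_eq hT hN hδ hstep hw hne ha hk h1 h2 i, Df_eval hδ hk h1 h2 i]

lemma solvesODE (hT : 0 < T) (hN : 0 < N) (hδ : 0 < δf T N)
    (hstep : ∀ k < N, w (k+1) = mstep (e k, a k) (w k))
    (hw : ∀ k ≤ N, w k ∈ stdSimplex ℝ (Fin r))
    (hne : ∀ k < N, (e k).1 ≠ (e k).2)
    (ha : ∀ k < N, 0 ≤ a k) :
    SolvesODE (Lfun T N e a (w 0)) (pathf T N e a (w 0)) T := by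
  have h0 : (volume : Measure ℝ) {T} = 0 := measure_singleton _
  constructor
  · intro i
    apply (Df_integrable (T := T) (N := N) (e := e) (a := a) i).integrableOn.congr
    rw [EventuallyEq, ae_restrict_iff' measurableSet_Icc]
    filter_upwards [compl_mem_ae_iff.mpr h0] with s hs hmem
    exact (drift_eq_Df hT hN hδ hstep hw hne ha hmem.1
      (lt_of_le_of_ne hmem.2 hs) i).symm
  · intro t ht i
    obtain ⟨k, hk, h1, h2⟩ := cover T N hT hN hδ t ht.1 ht.2
    have heq : ∫ s in Ioc (0:ℝ) t, (∑ j, Lfun T N e a (w 0) s j i * pathf T N e a (w 0) s j)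
        = ∫ s in Ioc (0:ℝ) t, Df T N e a s i := by
      apply setIntegral_congr_ae measurableSet_Ioc
      filter_upwards [compl_mem_ae_iff.mpr h0] with s hs hmem
      exact drift_eq_Df hT hN hδ hstep hw hne ha hmem.1.le
        (lt_of_le_of_ne (le_trans hmem.2 ht.2) hs) i
    rw [heq]
    have h0k : (0:ℝ) ≤ (k : ℝ) * δf T N := by positivity
    rw [← Ioc_union_Ioc_eq_Ioc h0k h1,
      setIntegral_union (Ioc_disjoint_Ioc_of_le le_rfl) measurableSet_Ioc
        (Df_integrable i).integrableOn (Df_integrable i).integrableOn,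
      Df_integral hδ k hk.le i, Df_integral_seg hδ hk h1 h2 i]
    have hm := master T N e a w hT hN hδ hstep k hk t h1 h2 i
    have hws := wsum T N e a w hδ.ne' hstep k hk.le i
    rw [path0 hδ]
    linarith

lemma tauStar_neg_one : tauStar (-1) = 1 := by
  unfold tauStar
  norm_num

lemma max_log_le (u : ℝ) (hu : 0 < u) : max 0 (-Real.log u) ≤ 2 * u ^ (-(1/2) : ℝ) := by
  have hpow : (0:ℝ) < u ^ (-(1/2) : ℝ) := Real.rpow_pos_of_pos hu _
  apply max_le (by positivity)
  have h1 : Real.log (u ^ (-(1/2):ℝ)) = -(1/2) * Real.log u := Real.log_rpow hu _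
  have h2 : Real.log (u ^ (-(1/2):ℝ)) ≤ u ^ (-(1/2):ℝ) - 1 :=
    Real.log_le_sub_one_of_pos hpow
  nlinarith

lemma coord_le_one {v : Fin r → ℝ} (hv : v ∈ stdSimplex ℝ (Fin r)) (i : Fin r) : v i ≤ 1 := by
  have h := Finset.single_le_sum (f := v) (fun j _ => hv.1 j) (Finset.mem_univ i)
  rw [hv.2] at h
  exact h

lemma path_mem (hT : 0 < T) (hN : 0 < N) (hδ : 0 < δf T N)
    (hstep : ∀ k < N, w (k+1) = mstep (e k, a k) (w k))
    (hw : ∀ k ≤ N, w k ∈ stdSimplex ℝ (Fin r)) :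
    ∀ t : ℝ, 0 ≤ t → t ≤ T → pathf T N e a (w 0) t ∈ stdSimplex ℝ (Fin r) := by
  intro t ht0 htT
  obtain ⟨k, hk, h1, h2⟩ := cover T N hT hN hδ t ht0 htT
  set θ : ℝ := (t - (k : ℝ) * δf T N) / δf T N with hθ
  have hθ0 : 0 ≤ θ := div_nonneg (by linarith) hδ.le
  have hθ1 : θ ≤ 1 := by
    rw [hθ, div_le_one hδ]
    nlinarith
  have hcomb : pathf T N e a (w 0) t = (1 - θ) • w k + θ • w (k+1) := by
    funext i
    rw [master T N e a w hT hN hδ hstep k hk t h1 h2 i]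
    have hw1 : w (k+1) i = w k i + a k * ((if i = (e k).2 then 1 else 0)
        - (if i = (e k).1 then 1 else 0)) := by
      rw [hstep k hk]
      rfl
    show w k i + slopef T N e a k i * (t - (k : ℝ) * δf T N)
      = (1 - θ) * w k i + θ * w (k+1) i
    rw [hw1, hθ]
    unfold slopef
    field_simp
    ring
  rw [hcomb]
  exact convex_stdSimplex ℝ (Fin r) (hw k hk.le) (hw (k+1) hk) (by linarith) hθ0 (by ring)

set_option maxHeartbeats 1000000 in
lemma point_bound (M : MeanFieldModel r) (hT : 0 < T) (hN : 0 < N) (hδ : 0 < δf T N)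
    (hstep : ∀ k < N, w (k+1) = mstep (e k, a k) (w k))
    (hw : ∀ k ≤ N, w k ∈ stdSimplex ℝ (Fin r))
    (hEk : ∀ k < N, e k ∈ M.E) (ha : ∀ k < N, 0 ≤ a k)
    {k : ℕ} (hk : k < N) {t : ℝ} (ht1 : (k : ℝ) * δf T N ≤ t)
    (ht2 : t < ((k : ℝ) + 1) * δf T N) :
    (∑ p ∈ M.E, pathf T N e a (w 0) t p.1 * M.lam p.1 p.2 (pathf T N e a (w 0) t) *
      tauStar (Lfun T N e a (w 0) t p.1 p.2 / M.lam p.1 p.2 (pathf T N e a (w 0) t) - 1))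
    ≤ (M.E.card : ℝ) * M.Cb + (δf T N)⁻¹ * max 0 (-Real.log M.c)
      + 2 * (δf T N)⁻¹ * ((((k : ℝ) + 1) * δf T N - t) ^ (-(1/2) : ℝ)) := by
  have hne : ∀ m < N, (e m).1 ≠ (e m).2 := by
    intro m hm h
    apply M.no_diag (e m).1
    have hpe : ((e m).1, (e m).1) = e m := Prod.ext_iff.mpr ⟨rfl, h⟩
    rw [hpe]
    exact hEk m hm
  have ht0 : (0:ℝ) ≤ t := le_trans (by positivity) ht1
  have htT : t ≤ T := by
    have hk1 : ((k : ℝ) + 1) ≤ (N : ℝ) := by exact_mod_cast hk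
    have hNδ : (N : ℝ) * δf T N = T := by unfold δf; field_simp
    nlinarith
  have hmem := path_mem hT hN hδ hstep hw t ht0 htT
  set μ := pathf T N e a (w 0) t with hμ
  -- bound for an edge with vanishing rate
  have hinact : ∀ p ∈ M.E, Lfun T N e a (w 0) t p.1 p.2 = 0 →
      μ p.1 * M.lam p.1 p.2 μ * tauStar (Lfun T N e a (w 0) t p.1 p.2 / M.lam p.1 p.2 μ - 1)
        ≤ M.Cb := by
    intro p hp hL0
    rw [hL0, zero_div, zero_sub, tauStar_neg_one, mul_one]
    have h1 := M.lam_lower p hp μ hmem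
    have h2 := M.lam_upper p hp μ hmem
    have h3 := coord_le_one hmem p.1
    calc pathf T N e a (w 0) t p.1 * M.lam p.1 p.2 μ
        ≤ 1 * M.lam p.1 p.2 μ :=
          mul_le_mul_of_nonneg_right h3 (le_trans M.c_pos.le h1)
      _ = M.lam p.1 p.2 μ := one_mul _
      _ ≤ M.Cb := h2
  have hCb : (0:ℝ) ≤ M.Cb :=
    le_trans M.c_pos.le (le_trans (M.lam_lower (e k) (hEk k hk) μ hmem)
      (M.lam_upper (e k) (hEk k hk) μ hmem))
  have hR : (0:ℝ) ≤ (δf T N)⁻¹ := by positivity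
  have hu : (0:ℝ) < ((k : ℝ) + 1) * δf T N - t := by linarith
  set u : ℝ := ((k : ℝ) + 1) * δf T N - t with hudef
  set extra : ℝ := (δf T N)⁻¹ * max 0 (-Real.log M.c) + 2 * (δf T N)⁻¹ * u ^ (-(1/2) : ℝ)
    with hextra
  have hextra0 : 0 ≤ extra := by
    have := Real.rpow_nonneg hu.le (-(1/2) : ℝ)
    have := le_max_left (0:ℝ) (-Real.log M.c)
    positivity
  -- bound for the active edge
  have hact : μ (e k).1 * M.lam (e k).1 (e k).2 μ *
      tauStar (Lfun T N e a (w 0) t (e k).1 (e k).2 / M.lam (e k).1 (e k).2 μ - 1)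
      ≤ M.Cb + extra := by
    have hekE := hEk k hk
    have hLval : Lfun T N e a (w 0) t (e k).1 (e k).2 = rhof T N e a (w 0) k t := by
      unfold Lfun
      rw [if_neg (hne k hk), Loff_eval hδ hk ht1 ht2, if_pos rfl]
    by_cases hρ0 : rhof T N e a (w 0) k t = 0
    · exact le_trans (hinact (e k) hekE (by rw [hLval, hρ0]))
        (le_add_of_nonneg_right hextra0)
    · -- positive rate on the active edge
      have hpos : 0 < μ (e k).1 := by
        by_contra hc
        apply hρ0
        unfold rhof
        rw [if_neg (by rw [← hμ]; exact hc)]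
      have hρval : rhof T N e a (w 0) k t = a k / δf T N / μ (e k).1 := by
        unfold rhof
        rw [if_pos (by rw [← hμ]; exact hpos)]
      set b : ℝ := a k / δf T N with hb
      have hb0 : 0 ≤ b := div_nonneg (ha k hk) hδ.le
      have hbpos : 0 < b := by
        rcases eq_or_lt_of_le hb0 with h | h
        · exfalso; apply hρ0; rw [hρval, ← h, zero_div]
        · exact h
      set ρ : ℝ := rhof T N e a (w 0) k t with hρ
      have hρpos : 0 < ρ := by rw [hρval]; positivity
      have hkey : ρ * μ (e k).1 = b := by
        rw [hρval]; field_simp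
      set lam : ℝ := M.lam (e k).1 (e k).2 μ with hlam
      have hlamc : M.c ≤ lam := M.lam_lower (e k) hekE μ hmem
      have hlampos : 0 < lam := lt_of_lt_of_le M.c_pos hlamc
      have hlamCb : lam ≤ M.Cb := M.lam_upper (e k) hekE μ hmem
      rw [hLval]
      have htau : tauStar (ρ / lam - 1) = ρ / lam * Real.log (ρ / lam) - (ρ / lam - 1) := by
        unfold tauStar
        rw [show ρ / lam - 1 + 1 = ρ / lam by ring]
      have he1 : μ (e k).1 * lam * (ρ / lam * Real.log (ρ / lam) - (ρ / lam - 1))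
          = (ρ * μ (e k).1) * Real.log (ρ / lam) - ρ * μ (e k).1 + μ (e k).1 * lam := by
        field_simp
        ring
      rw [htau, he1, hkey]
      rw [Real.log_div hρpos.ne' hlampos.ne']
      -- b * (log ρ - log lam) - b + μ * lam ≤ Cb + extra
      have ha1 : a k ≤ 1 := by
        have h1 : w (k+1) (e k).1 = w k (e k).1 - a k := by
          rw [hstep k hk]
          show w k (e k).1 + a k * ((if (e k).1 = (e k).2 then (1:ℝ) else 0)
            - (if (e k).1 = (e k).1 then 1 else 0)) = _
          rw [if_neg (hne k hk), if_pos rfl]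
          ring
        have h2 := (hw (k+1) hk).1 (e k).1
        have h3 := coord_le_one (hw k hk.le) (e k).1
        linarith
      have hbR : b ≤ (δf T N)⁻¹ := by
        rw [hb, div_eq_mul_inv]
        nlinarith
      have hρle : ρ ≤ 1 / u := by
        rw [le_div_iff₀ hu]
        have hpp := pos_path hT hN hδ hstep hw hne k hk t ht1 ht2.le
        rw [← hμ] at hpp
        calc ρ * u = b * u / μ (e k).1 := by rw [← hkey]; field_simp
          _ ≤ 1 := by
              rw [div_le_one hpos]
              calc b * u ≤ μ (e k).1 := by rw [hudef]; exact hpp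
                _ = μ (e k).1 * 1 := by ring
                _ ≤ _ := by nlinarith [hmem.1 (e k).1]
      have hlog1 : Real.log ρ ≤ -Real.log u := by
        have := (Real.log_le_log_iff hρpos (by positivity)).mpr hρle
        rwa [Real.log_div one_ne_zero hu.ne', Real.log_one, zero_sub] at this
      have hblogρ : b * Real.log ρ ≤ (δf T N)⁻¹ * max 0 (-Real.log u) := by
        rcases le_or_gt (Real.log ρ) 0 with h | h
        · have h1 : b * Real.log ρ ≤ 0 := mul_nonpos_of_nonneg_of_nonpos hb0 h
          have h2 : (0:ℝ) ≤ (δf T N)⁻¹ * max 0 (-Real.log u) :=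
            mul_nonneg hR (le_max_left _ _)
          linarith
        · calc b * Real.log ρ ≤ (δf T N)⁻¹ * Real.log ρ :=
              mul_le_mul_of_nonneg_right hbR h.le
            _ ≤ (δf T N)⁻¹ * max 0 (-Real.log u) :=
              mul_le_mul_of_nonneg_left (le_trans hlog1 (le_max_right _ _)) hR
      have hmax : max 0 (-Real.log u) ≤ 2 * u ^ (-(1/2) : ℝ) := max_log_le u hu
      have hblogc : b * (-Real.log lam) ≤ (δf T N)⁻¹ * max 0 (-Real.log M.c) := by
        have h1 : -Real.log lam ≤ -Real.log M.c := by
          have := (Real.log_le_log_iff M.c_pos hlampos).mpr hlamc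
          linarith
        rcases le_or_gt (-Real.log M.c) 0 with h | h
        · have h2 : b * (-Real.log lam) ≤ 0 :=
            mul_nonpos_of_nonneg_of_nonpos hb0 (by linarith)
          have h3 : (0:ℝ) ≤ (δf T N)⁻¹ * max 0 (-Real.log M.c) :=
            mul_nonneg hR (le_max_left _ _)
          linarith
        · calc b * (-Real.log lam) ≤ b * (-Real.log M.c) :=
              mul_le_mul_of_nonneg_left h1 hb0
            _ ≤ (δf T N)⁻¹ * (-Real.log M.c) := mul_le_mul_of_nonneg_right hbR h.le
            _ ≤ (δf T N)⁻¹ * max 0 (-Real.log M.c) :=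
              mul_le_mul_of_nonneg_left (le_max_right _ _) hR
      have hmulam : μ (e k).1 * lam ≤ M.Cb := by
        have h3 := coord_le_one hmem (e k).1
        calc μ (e k).1 * lam ≤ 1 * lam := mul_le_mul_of_nonneg_right h3 hlampos.le
          _ = lam := one_mul lam
          _ ≤ M.Cb := hlamCb
      have hfin : (δf T N)⁻¹ * max 0 (-Real.log u)
          ≤ 2 * (δf T N)⁻¹ * u ^ (-(1/2) : ℝ) := by
        calc (δf T N)⁻¹ * max 0 (-Real.log u) ≤ (δf T N)⁻¹ * (2 * u ^ (-(1/2) : ℝ)) :=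
            mul_le_mul_of_nonneg_left hmax hR
          _ = 2 * (δf T N)⁻¹ * u ^ (-(1/2) : ℝ) := by ring
      have : b * (Real.log ρ - Real.log lam) = b * Real.log ρ + b * (-Real.log lam) := by ring
      rw [hextra]
      linarith
  -- assemble the sum
  calc (∑ p ∈ M.E, μ p.1 * M.lam p.1 p.2 μ *
        tauStar (Lfun T N e a (w 0) t p.1 p.2 / M.lam p.1 p.2 μ - 1))
      ≤ ∑ p ∈ M.E, (M.Cb + if p = e k then extra else 0) := by
        apply Finset.sum_le_sum
        intro p hp
        by_cases hpk : p = e k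
        · rw [if_pos hpk]
          rw [hpk]
          exact hact
        · rw [if_neg hpk, add_zero]
          apply hinact p hp
          have hp12 : p.1 ≠ p.2 := by
            intro h
            exact M.no_diag p.1 ((Prod.ext_iff.mpr ⟨rfl, h⟩ : (p.1, p.1) = p) ▸ hp)
          unfold Lfun
          rw [if_neg hp12, Loff_eval hδ hk ht1 ht2, if_neg (fun hc => hpk hc)]
    _ = (M.E.card : ℝ) * M.Cb + extra := by
        rw [Finset.sum_add_distrib, Finset.sum_const, Finset.sum_ite_eq' M.E (e k),
          if_pos (hEk k hk), nsmul_eq_mul]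
    _ ≤ _ := by
        rw [hextra]
        linarith

def segB (M : MeanFieldModel r) (T : ℝ) (N : ℕ) : ℝ :=
  ((M.E.card : ℝ) * M.Cb + (δf T N)⁻¹ * max 0 (-Real.log M.c)) * δf T N
    + 4 * (δf T N)⁻¹ * (δf T N) ^ ((1:ℝ)/2)

def costC (M : MeanFieldModel r) (T : ℝ) (N : ℕ) : ℝ := (N : ℝ) * segB M T N

set_option maxHeartbeats 1000000 in
lemma seg_cost (M : MeanFieldModel r) (hT : 0 < T) (hN : 0 < N) (hδ : 0 < δf T N)
    (hstep : ∀ k < N, w (k+1) = mstep (e k, a k) (w k))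
    (hw : ∀ k ≤ N, w k ∈ stdSimplex ℝ (Fin r))
    (hEk : ∀ k < N, e k ∈ M.E) (ha : ∀ k < N, 0 ≤ a k) (hCb : 0 ≤ M.Cb)
    {k : ℕ} (hk : k < N) :
    ∫⁻ t in Ioc ((k : ℝ) * δf T N) (((k : ℝ) + 1) * δf T N),
      ENNReal.ofReal (∑ p ∈ M.E, pathf T N e a (w 0) t p.1 *
        M.lam p.1 p.2 (pathf T N e a (w 0) t) *
        tauStar (Lfun T N e a (w 0) t p.1 p.2 /
          M.lam p.1 p.2 (pathf T N e a (w 0) t) - 1))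
    ≤ ENNReal.ofReal (segB M T N) := by
  set c1 : ℝ := (M.E.card : ℝ) * M.Cb + (δf T N)⁻¹ * max 0 (-Real.log M.c) with hc1
  have hc10 : 0 ≤ c1 := by
    have h1 : (0:ℝ) ≤ (M.E.card : ℝ) * M.Cb := mul_nonneg (Nat.cast_nonneg _) hCb
    have h2 : (0:ℝ) ≤ (δf T N)⁻¹ * max 0 (-Real.log M.c) :=
      mul_nonneg (by positivity) (le_max_left _ _)
    rw [hc1]
    linarith
  set g : ℝ → ℝ :=
    fun t => c1 + 2 * (δf T N)⁻¹ * ((((k : ℝ) + 1) * δf T N - t) ^ (-(1/2) : ℝ)) with hg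
  have hle : (k : ℝ) * δf T N ≤ ((k : ℝ) + 1) * δf T N := by nlinarith
  have hstep1 : ∫⁻ t in Ioc ((k : ℝ) * δf T N) (((k : ℝ) + 1) * δf T N),
      ENNReal.ofReal (∑ p ∈ M.E, pathf T N e a (w 0) t p.1 *
        M.lam p.1 p.2 (pathf T N e a (w 0) t) *
        tauStar (Lfun T N e a (w 0) t p.1 p.2 /
          M.lam p.1 p.2 (pathf T N e a (w 0) t) - 1))
      ≤ ∫⁻ t in Ioc ((k : ℝ) * δf T N) (((k : ℝ) + 1) * δf T N), ENNReal.ofReal (g t) := by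
    apply lintegral_mono_ae
    rw [ae_restrict_iff' measurableSet_Ioc]
    filter_upwards [compl_mem_ae_iff.mpr
      (measure_singleton ((((k : ℝ) + 1) * δf T N)) : (volume : Measure ℝ) _ = 0)]
      with t ht hmem
    apply ENNReal.ofReal_le_ofReal
    exact point_bound M hT hN hδ hstep hw hEk ha hk hmem.1.le (lt_of_le_of_ne hmem.2 ht)
  have hint1 : IntervalIntegrable
      (fun t => ((((k : ℝ) + 1) * δf T N - t) ^ (-(1/2) : ℝ))) volume
      ((k : ℝ) * δf T N) (((k : ℝ) + 1) * δf T N) := by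
    have h1 : IntervalIntegrable (fun s : ℝ => s ^ (-(1/2) : ℝ)) volume 0 (δf T N) :=
      intervalIntegral.intervalIntegrable_rpow' (by norm_num)
    have h2 := (h1.comp_sub_left (((k : ℝ) + 1) * δf T N)).symm
    rw [sub_zero, show ((k : ℝ) + 1) * δf T N - δf T N = (k : ℝ) * δf T N by ring] at h2
    exact h2
  have hgint : IntegrableOn g (Ioc ((k : ℝ) * δf T N) (((k : ℝ) + 1) * δf T N)) := by
    have h3 := (intervalIntegrable_iff_integrableOn_Ioc_of_le hle).mp
      (hint1.const_mul (2 * (δf T N)⁻¹))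
    exact (integrableOn_const measure_Ioc_lt_top.ne).add h3
  have hgnn : 0 ≤ᵐ[volume.restrict (Ioc ((k : ℝ) * δf T N) (((k : ℝ) + 1) * δf T N))] g := by
    rw [EventuallyLE, ae_restrict_iff' measurableSet_Ioc]
    apply ae_of_all
    intro t hmem
    have hb : (0:ℝ) ≤ ((k : ℝ) + 1) * δf T N - t := by
      have := hmem.2
      linarith
    have := Real.rpow_nonneg hb (-(1/2) : ℝ)
    show (0:ℝ) ≤ c1 + 2 * (δf T N)⁻¹ * _
    positivity
  have hval : ∫ t in Ioc ((k : ℝ) * δf T N) (((k : ℝ) + 1) * δf T N), g t = segB M T N := by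
    rw [← intervalIntegral.integral_of_le hle]
    have hadd : ∫ t in ((k : ℝ) * δf T N)..(((k : ℝ) + 1) * δf T N), g t
        = (∫ _t in ((k : ℝ) * δf T N)..(((k : ℝ) + 1) * δf T N), c1)
          + ∫ t in ((k : ℝ) * δf T N)..(((k : ℝ) + 1) * δf T N),
              2 * (δf T N)⁻¹ * ((((k : ℝ) + 1) * δf T N - t) ^ (-(1/2) : ℝ)) := by
      rw [← intervalIntegral.integral_add intervalIntegrable_const
        (hint1.const_mul (2 * (δf T N)⁻¹))]
    rw [hadd, intervalIntegral.integral_const, intervalIntegral.integral_const_mul]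
    have hcomp : ∫ t in ((k : ℝ) * δf T N)..(((k : ℝ) + 1) * δf T N),
        ((((k : ℝ) + 1) * δf T N - t) ^ (-(1/2) : ℝ))
        = ∫ x in (0:ℝ)..(δf T N), x ^ (-(1/2) : ℝ) := by
      rw [intervalIntegral.integral_comp_sub_left
        (fun s : ℝ => s ^ (-(1/2) : ℝ)) (((k : ℝ) + 1) * δf T N)]
      rw [sub_self, show ((k : ℝ) + 1) * δf T N - (k : ℝ) * δf T N = δf T N by ring]
    rw [hcomp, integral_rpow (Or.inl (by norm_num)),
      Real.zero_rpow (by norm_num : (-(1/2) : ℝ) + 1 ≠ 0)]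
    unfold segB
    rw [← hc1, smul_eq_mul]
    have : (-(1/2) : ℝ) + 1 = 1/2 := by norm_num
    rw [this]
    field_simp
    ring
  calc ∫⁻ t in Ioc ((k : ℝ) * δf T N) (((k : ℝ) + 1) * δf T N),
        ENNReal.ofReal (∑ p ∈ M.E, pathf T N e a (w 0) t p.1 *
          M.lam p.1 p.2 (pathf T N e a (w 0) t) *
          tauStar (Lfun T N e a (w 0) t p.1 p.2 /
            M.lam p.1 p.2 (pathf T N e a (w 0) t) - 1))
      ≤ ∫⁻ t in Ioc ((k : ℝ) * δf T N) (((k : ℝ) + 1) * δf T N), ENNReal.ofReal (g t) :=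
        hstep1
    _ = ENNReal.ofReal (∫ t in Ioc ((k : ℝ) * δf T N) (((k : ℝ) + 1) * δf T N), g t) :=
        (ofReal_integral_eq_lintegral_ofReal hgint hgnn).symm
    _ = ENNReal.ofReal (segB M T N) := by rw [hval]

lemma total_cost (M : MeanFieldModel r) (hT : 0 < T) (hN : 0 < N) (hδ : 0 < δf T N)
    (hstep : ∀ k < N, w (k+1) = mstep (e k, a k) (w k))
    (hw : ∀ k ≤ N, w k ∈ stdSimplex ℝ (Fin r))
    (hEk : ∀ k < N, e k ∈ M.E) (ha : ∀ k < N, 0 ≤ a k) (hCb : 0 ≤ M.Cb) :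
    runningCost M (pathf T N e a (w 0)) (Lfun T N e a (w 0)) T
      ≤ ENNReal.ofReal (costC M T N) := by
  have hNδ : (N : ℝ) * δf T N = T := by unfold δf; field_simp
  have hind : ∀ k, k ≤ N → ∫⁻ t in Ioc (0:ℝ) ((k : ℝ) * δf T N),
      ENNReal.ofReal (∑ p ∈ M.E, pathf T N e a (w 0) t p.1 *
        M.lam p.1 p.2 (pathf T N e a (w 0) t) *
        tauStar (Lfun T N e a (w 0) t p.1 p.2 /
          M.lam p.1 p.2 (pathf T N e a (w 0) t) - 1))
      ≤ (k : ℝ≥0∞) * ENNReal.ofReal (segB M T N) := by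
    intro k
    induction k with
    | zero => simp
    | succ k ih =>
        intro hk
        have hk' : k < N := hk
        have h0k : (0:ℝ) ≤ (k : ℝ) * δf T N := by positivity
        have hle : (k : ℝ) * δf T N ≤ ((k : ℝ) + 1) * δf T N := by nlinarith
        have hcast : ((k + 1 : ℕ) : ℝ) = (k : ℝ) + 1 := by push_cast; ring
        rw [hcast, ← Ioc_union_Ioc_eq_Ioc h0k hle]
        calc ∫⁻ t in Ioc (0:ℝ) ((k : ℝ) * δf T N) ∪
              Ioc ((k : ℝ) * δf T N) (((k : ℝ) + 1) * δf T N), _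
            ≤ _ + _ := lintegral_union_le _ _ _
          _ ≤ (k : ℝ≥0∞) * ENNReal.ofReal (segB M T N) + ENNReal.ofReal (segB M T N) :=
              add_le_add (ih hk'.le) (seg_cost M hT hN hδ hstep hw hEk ha hCb hk')
          _ = ((k + 1 : ℕ) : ℝ≥0∞) * ENNReal.ofReal (segB M T N) := by
              push_cast
              rw [add_mul, one_mul]
  have hmain := hind N le_rfl
  rw [hNδ] at hmain
  unfold runningCost costC
  calc ∫⁻ t in Ioc (0:ℝ) T, _ ≤ (N : ℝ≥0∞) * ENNReal.ofReal (segB M T N) := hmain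
    _ = ENNReal.ofReal (costC M T N) := by
        unfold costC
        rw [ENNReal.ofReal_mul (Nat.cast_nonneg N), ENNReal.ofReal_natCast]

lemma pathT (hT : 0 < T) (hN : 0 < N) (hδ : 0 < δf T N)
    (hstep : ∀ k < N, w (k+1) = mstep (e k, a k) (w k)) :
    pathf T N e a (w 0) T = w N := by
  have hNδ : (N : ℝ) * δf T N = T := by unfold δf; field_simp
  funext i
  unfold pathf
  have hfull : ∀ m ∈ Finset.range N, slopef T N e a m i * clipf T N m T
      = slopef T N e a m i * δf T N := by
    intro m hm
    rw [clip_eq_delta hδ.le]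
    have h1 : ((m : ℝ) + 1) ≤ (N : ℝ) := by exact_mod_cast Finset.mem_range.mp hm
    nlinarith
  rw [Finset.sum_congr rfl hfull]
  have hws := wsum T N e a w hδ.ne' hstep N le_rfl i
  linarith

lemma path_piecewise (hT : 0 < T) (hN : 0 < N) (hδ : 0 < δf T N)
    (hstep : ∀ k < N, w (k+1) = mstep (e k, a k) (w k)) :
    PiecewiseLinear (pathf T N e a (w 0)) T := by
  have hNδ : (N : ℝ) * δf T N = T := by unfold δf; field_simp
  refine ⟨N, fun j => ((j : ℕ) : ℝ) * δf T N, ?_, by simp, ?_, ?_⟩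
  · intro k1 k2 h
    have hl : ((k1 : ℕ) : ℝ) < ((k2 : ℕ) : ℝ) := by exact_mod_cast h
    exact mul_lt_mul_of_pos_right hl hδ
  · show ((Fin.last N : Fin (N+1)) : ℕ) * δf T N = T
    rw [Fin.val_last]
    exact hNδ
  · intro k u hu i
    have hc1 : ((k.castSucc : Fin (N+1)) : ℕ) = (k : ℕ) := Fin.coe_castSucc k
    have hc2 : ((k.succ : Fin (N+1)) : ℕ) = (k : ℕ) + 1 := Fin.val_succ k
    simp only [hc1, hc2, Nat.cast_add, Nat.cast_one] at hu ⊢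
    have hkN : (k : ℕ) < N := k.isLt
    have hm := master T N e a w hT hN hδ hstep (k : ℕ) hkN u hu.1 hu.2 i
    have hm0 := master T N e a w hT hN hδ hstep (k : ℕ) hkN (((k : ℕ) : ℝ) * δf T N)
      le_rfl (by nlinarith) i
    have hm1 := master T N e a w hT hN hδ hstep (k : ℕ) hkN ((((k : ℕ) : ℝ) + 1) * δf T N)
      (by nlinarith) le_rfl i
    rw [hm, hm0, hm1]
    have hd : (((k : ℕ) : ℝ) + 1) * δf T N - ((k : ℕ) : ℝ) * δf T N = δf T N := by ring
    rw [hd]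
    field_simp
    ring

lemma core (M : MeanFieldModel r) (T : ℝ) (hT : 0 < T) (N : ℕ) (hN : 0 < N)
    (e : ℕ → Fin r × Fin r) (a : ℕ → ℝ) (w : ℕ → Fin r → ℝ)
    (hEk : ∀ k < N, e k ∈ M.E) (ha : ∀ k < N, 0 ≤ a k)
    (hw : ∀ k ≤ N, w k ∈ stdSimplex ℝ (Fin r))
    (hstep : ∀ k < N, w (k+1) = mstep (e k, a k) (w k)) :
    ∃ μ : ℝ → Fin r → ℝ, PiecewiseLinear μ T ∧ μ 0 = w 0 ∧ μ T = w N ∧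
      SPath M T (w 0) μ ≤ ENNReal.ofReal (costC M T N) := by
  have hδ : 0 < δf T N := div_pos hT (Nat.cast_pos.mpr hN)
  have hCb : (0:ℝ) ≤ M.Cb :=
    le_trans M.c_pos.le (le_trans (M.lam_lower (e 0) (hEk 0 hN) (w 0) (hw 0 (Nat.zero_le N)))
      (M.lam_upper (e 0) (hEk 0 hN) (w 0) (hw 0 (Nat.zero_le N))))
  refine ⟨pathf T N e a (w 0), path_piecewise hT hN hδ hstep, path0 hδ,
    pathT hT hN hδ hstep, ?_⟩
  have hcond : IsRateMatrix M (Lfun T N e a (w 0)) ∧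
      SolvesODE (Lfun T N e a (w 0)) (pathf T N e a (w 0)) T ∧
      pathf T N e a (w 0) 0 = w 0 ∧
      ∀ t ∈ Icc (0:ℝ) T, pathf T N e a (w 0) t ∈ stdSimplex ℝ (Fin r) := by
    have hne : ∀ m < N, (e m).1 ≠ (e m).2 := by
      intro m hm h
      apply M.no_diag (e m).1
      have hpe : ((e m).1, (e m).1) = e m := Prod.ext_iff.mpr ⟨rfl, h⟩
      rw [hpe]
      exact hEk m hm
    exact ⟨isRateMatrix M hδ hEk ha, solvesODE hT hN hδ hstep hw hne ha, path0 hδ,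
      fun t ht => path_mem hT hN hδ hstep hw t ht.1 ht.2⟩
  calc SPath M T (w 0) (pathf T N e a (w 0))
      ≤ runningCost M (pathf T N e a (w 0)) (Lfun T N e a (w 0)) T :=
        iInf₂_le (Lfun T N e a (w 0)) hcond
    _ ≤ ENNReal.ofReal (costC M T N) := total_cost M hT hN hδ hstep hw hEk ha hCb

end Core2

end Stmt0Aux


/-- for every `T > 0` there is a finite constant `C₁(T)` such that
any `ν, ξ ∈ M₁(Z)` are joined by a continuous piecewise linear path (constant
velocity on each segment) of cost at most `C₁(T)`; consequently
`S_T(ξ|ν) ≤ C₁(T)`. -/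
theorem stmt0 (r : ℕ) (hr : 0 < r) (M : MeanFieldModel r) (T : ℝ) (hT : 0 < T) :
    ∃ C₁ : ℝ, ∀ ν ∈ stdSimplex ℝ (Fin r), ∀ ξ ∈ stdSimplex ℝ (Fin r),
      (∃ μ : ℝ → Fin r → ℝ, PiecewiseLinear μ T ∧ μ 0 = ν ∧ μ T = ξ ∧
        SPath M T ν μ ≤ ENNReal.ofReal C₁) ∧
      SEnd M T ν ξ ≤ ENNReal.ofReal C₁ := by
  rcases Nat.lt_or_ge r 2 with hr1 | hr2
  · -- r = 1 : the simplex is a single point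
    have hr1' : r = 1 := by omega
    subst hr1'
    refine ⟨0, ?_⟩
    intro ν hν ξ hξ
    have hE : M.E = ∅ := by
      rw [Finset.eq_empty_iff_forall_notMem]
      intro p hp
      have h12 : p.1 = p.2 := Subsingleton.elim _ _
      exact M.no_diag p.1 ((Prod.ext_iff.mpr ⟨rfl, h12⟩ : (p.1, p.1) = p) ▸ hp)
    have hνξ : ν = ξ := by
      funext x
      have h1 : ν x = 1 := by
        have := hν.2
        rwa [Fintype.sum_subsingleton (f := ν) x] at this
      have h2 : ξ x = 1 := by
        have := hξ.2
        rwa [Fintype.sum_subsingleton (f := ξ) x] at this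
      rw [h1, h2]
    set μc : ℝ → Fin 1 → ℝ := fun _ => ν with hμc
    have hpl : PiecewiseLinear μc T := by
      refine ⟨1, fun j => ((j : ℕ) : ℝ) * T, ?_, by simp, ?_, ?_⟩
      · intro k1 k2 h
        have hl : ((k1 : ℕ) : ℝ) < ((k2 : ℕ) : ℝ) := by exact_mod_cast h
        exact mul_lt_mul_of_pos_right hl hT
      · show ((Fin.last 1 : Fin 2) : ℕ) * T = T
        rw [Fin.val_last]
        norm_num
      · intro k u _ i
        show ν i = ν i + _ * (ν i - ν i)
        ring
    have hSPath : SPath M T ν μc ≤ ENNReal.ofReal 0 := by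
      have hcond : IsRateMatrix M (fun _ _ _ => (0:ℝ)) ∧
          SolvesODE (fun _ _ _ => (0:ℝ)) μc T ∧ μc 0 = ν ∧
          ∀ t ∈ Icc (0:ℝ) T, μc t ∈ stdSimplex ℝ (Fin 1) := by
        refine ⟨⟨fun _ _ => measurable_const, fun _ _ _ _ => le_rfl,
          fun _ _ _ _ _ => rfl, fun t i => by simp⟩, ⟨?_, ?_⟩, rfl, fun t _ => hν⟩
        · intro i
          have hz : (fun t => ∑ j, (0:ℝ) * μc t j) = fun _ => (0:ℝ) := by
            funext t; simp
          rw [hz]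
          exact integrableOn_zero
        · intro t _ i
          simp [hμc]
      calc SPath M T ν μc ≤ runningCost M μc (fun _ _ _ => (0:ℝ)) T :=
            iInf₂_le (fun _ _ _ => (0:ℝ)) hcond
        _ = 0 := by
            unfold runningCost
            rw [hE]
            simp
        _ ≤ ENNReal.ofReal 0 := by simp
    refine ⟨⟨μc, hpl, rfl, hνξ, hSPath⟩, ?_⟩
    calc SEnd M T ν ξ ≤ SPath M T ν μc := iInf₂_le μc ⟨rfl, hνξ⟩
      _ ≤ ENNReal.ofReal 0 := hSPath
  · -- r ≥ 2
    obtain ⟨Np, hNp, hplan⟩ := Stmt0Aux.plan M hr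
    have hN : 0 < Np := hNp hr2
    refine ⟨Stmt0Aux.costC M T Np, ?_⟩
    intro ν hν ξ hξ
    obtain ⟨ms, hlen, hvalid⟩ := hplan ν hν ξ hξ
    obtain ⟨e, a, w, hstep3, hmem, hw0, hwlast⟩ :=
      Stmt0Aux.valid_to_fun M hr ms ν ξ hν hvalid
    rw [hlen] at hstep3 hmem hwlast
    obtain ⟨μ, hpl, hμ0, hμT, hS⟩ := Stmt0Aux.core M T hT Np hN e a w
      (fun k hk => (hstep3 k hk).1) (fun k hk => (hstep3 k hk).2.1) hmem
      (fun k hk => (hstep3 k hk).2.2)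
    have hSP : SPath M T ν μ ≤ ENNReal.ofReal (Stmt0Aux.costC M T Np) := by
      rw [← hw0]
      exact hS
    refine ⟨⟨μ, hpl, hμ0.trans hw0, hμT.trans hwlast, hSP⟩, ?_⟩
    calc SEnd M T ν ξ ≤ SPath M T ν μ :=
          iInf₂_le μ ⟨hμ0.trans hw0, hμT.trans hwlast⟩
      _ ≤ ENNReal.ofReal (Stmt0Aux.costC M T Np) := hSP
end
end

section
/- Under assumptions (A1)–(A3), the mapping (ν, ξ) ↦ V(ξ|ν) is uniformly continuous on M_1(Z) × M_1(Z). -/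
open MeasureTheory Set ENNReal Filter

section Routing

namespace Stmt3Aux

open Finset

set_option maxHeartbeats 1000000

variable {r : ℕ}

/-- divergence (inflow minus outflow) of an edge-flow matrix. -/
def divg (f : Fin r → Fin r → ℝ) (i : Fin r) : ℝ :=
  (∑ j, f j i) - (∑ j, f i j)

lemma divg_add (f g : Fin r → Fin r → ℝ) (i : Fin r) :
    divg (fun a b => f a b + g a b) i = divg f i + divg g i := by
  simp [divg, Finset.sum_add_distrib]; ring

lemma divg_sum {ι : Type*} [Fintype ι] (g : ι → Fin r → Fin r → ℝ) (i : Fin r) :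
    divg (fun a b => ∑ x, g x a b) i = ∑ x, divg (g x) i := by
  simp only [divg]
  rw [Finset.sum_sub_distrib]
  congr 1
  · exact Finset.sum_comm
  · exact Finset.sum_comm

lemma exists_pair_flow (M : MeanFieldModel r) (a b : Fin r) :
    ∃ g : Fin r → Fin r → ℝ, (∀ i j, 0 ≤ g i j) ∧ (∀ i j, (i, j) ∉ M.E → g i j = 0) ∧
      (∀ i, divg g i = (if i = b then (1 : ℝ) else 0) - (if i = a then 1 else 0)) := by
  have h := M.irreducible a b
  induction h with
  | refl =>
      exact ⟨0, fun i j => le_rfl, fun i j _ => rfl, fun i => by simp [divg]⟩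
  | @tail c d hac hcd ih =>
      obtain ⟨g, hg0, hgE, hgd⟩ := ih
      refine ⟨fun i j => g i j + (if i = c ∧ j = d then 1 else 0), ?_, ?_, ?_⟩
      · intro i j
        have := hg0 i j
        positivity
      · intro i j hij
        have h1 : g i j = 0 := hgE i j hij
        have h2 : ¬(i = c ∧ j = d) := by
          rintro ⟨rfl, rfl⟩; exact hij hcd
        simp [h1, h2]
      · intro i
        rw [divg_add, hgd]
        have hd : divg (fun i j => if i = c ∧ j = d then (1 : ℝ) else 0) i =
            (if i = d then (1 : ℝ) else 0) - (if i = c then 1 else 0) := by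
          have e1 : (∑ j : Fin r, if j = c ∧ i = d then (1:ℝ) else 0)
              = if i = d then 1 else 0 := by
            by_cases hid : i = d
            · simp [hid]
            · simp [hid]
          have e2 : (∑ j : Fin r, if i = c ∧ j = d then (1:ℝ) else 0)
              = if i = c then 1 else 0 := by
            by_cases hic : i = c
            · simp [hic]
            · simp [hic]
          simp only [divg]
          rw [e1, e2]
        rw [hd]
        ring

lemma exists_routing (M : MeanFieldModel r) :
    ∃ N : ℝ, 0 ≤ N ∧ ∀ v : Fin r → ℝ, (∑ i, v i) = 0 →
      ∃ f : Fin r → Fin r → ℝ, (∀ i j, 0 ≤ f i j) ∧ (∀ i j, (i, j) ∉ M.E → f i j = 0) ∧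
        (∀ i, divg f i = v i) ∧ (∀ i j, f i j ≤ N * ∑ k, |v k|) := by
  classical
  choose G hG0 hGE hGd using fun a b => exists_pair_flow M a b
  set N : ℝ := ∑ a : Fin r, ∑ b : Fin r, ∑ i : Fin r, ∑ j : Fin r, G a b i j with hN
  have hGle : ∀ a b i j, G a b i j ≤ N := by
    intro a b i j
    have h1 : G a b i j ≤ ∑ j', G a b i j' :=
      Finset.single_le_sum (fun k _ => hG0 a b i k) (Finset.mem_univ j)
    have h2 : ∑ j', G a b i j' ≤ ∑ i', ∑ j', G a b i' j' :=
      Finset.single_le_sum (f := fun i' => ∑ j', G a b i' j')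
        (fun k _ => Finset.sum_nonneg fun k' _ => hG0 a b k k') (Finset.mem_univ i)
    have h3 : ∑ i', ∑ j', G a b i' j' ≤ ∑ b', ∑ i', ∑ j', G a b' i' j' :=
      Finset.single_le_sum (f := fun b' => ∑ i', ∑ j', G a b' i' j')
        (fun k _ => Finset.sum_nonneg fun k' _ => Finset.sum_nonneg fun k'' _ => hG0 a k k' k'')
        (Finset.mem_univ b)
    have h4 : ∑ b', ∑ i', ∑ j', G a b' i' j' ≤ N :=
      Finset.single_le_sum (f := fun a' => ∑ b', ∑ i', ∑ j', G a' b' i' j')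
        (fun k _ => Finset.sum_nonneg fun k' _ => Finset.sum_nonneg fun k'' _ =>
          Finset.sum_nonneg fun k''' _ => hG0 k k' k'' k''') (Finset.mem_univ a)
    linarith
  have hN0 : 0 ≤ N :=
    Finset.sum_nonneg fun a _ => Finset.sum_nonneg fun b _ => Finset.sum_nonneg fun i _ =>
      Finset.sum_nonneg fun j _ => hG0 a b i j
  refine ⟨N, hN0, ?_⟩
  intro v hv
  set S : ℝ := ∑ k, max (v k) 0 with hS
  have hS0 : 0 ≤ S := Finset.sum_nonneg fun k _ => le_max_right _ _
  have hSabs : S ≤ ∑ k, |v k| :=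
    Finset.sum_le_sum fun k _ => max_le (le_abs_self _) (abs_nonneg _)
  have habs0 : (0:ℝ) ≤ ∑ k, |v k| := Finset.sum_nonneg fun k _ => abs_nonneg _
  have hSneg : ∑ k, max (-v k) 0 = S := by
    have hpt : ∀ k, max (v k) 0 - max (-v k) 0 = v k := by
      intro k
      rcases le_total (v k) 0 with h | h
      · simp [max_eq_right h, max_eq_left (neg_nonneg.mpr h)]
      · simp [max_eq_left h, max_eq_right (neg_nonpos.mpr h)]
    have h2 : ∑ k, (max (v k) 0 - max (-v k) 0) = 0 := by
      simp_rw [hpt]; exact hv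
    rw [Finset.sum_sub_distrib] at h2
    linarith
  rcases eq_or_lt_of_le hS0 with hS0' | hSpos
  · -- S = 0 : v = 0
    have hmaxp := (Finset.sum_eq_zero_iff_of_nonneg
      (fun k _ => le_max_right (v k) 0)).mp hS0'.symm
    have hmaxn := (Finset.sum_eq_zero_iff_of_nonneg
      (fun k _ => le_max_right (-v k) 0)).mp (hSneg.trans hS0'.symm)
    have hvz : ∀ k, v k = 0 := by
      intro k
      have h1 := hmaxp k (Finset.mem_univ k)
      have h2 := hmaxn k (Finset.mem_univ k)
      have h3 : v k ≤ 0 := by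
        by_contra h; push_neg at h
        rw [max_eq_left h.le] at h1; exact h.ne' h1
      have h4 : -v k ≤ 0 := by
        by_contra h; push_neg at h
        rw [max_eq_left h.le] at h2
        exact absurd h2 (by linarith)
      linarith
    refine ⟨fun _ _ => 0, fun i j => le_rfl, fun i j _ => rfl,
      fun i => by simp [divg, hvz i], ?_⟩
    intro i j
    exact mul_nonneg hN0 habs0
  · -- S > 0
    have hSne : S ≠ 0 := ne_of_gt hSpos
    set w : Fin r × Fin r → ℝ := fun p => max (-v p.1) 0 * max (v p.2) 0 / S with hw
    have hw0 : ∀ p, 0 ≤ w p := fun p =>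
      div_nonneg (mul_nonneg (le_max_right _ _) (le_max_right _ _)) hS0
    have hwi : ∀ i : Fin r, ∑ aa : Fin r, w (aa, i) = max (v i) 0 := by
      intro i
      simp only [hw]
      rw [← Finset.sum_div, ← Finset.sum_mul, hSneg]
      field_simp
    have hwj : ∀ i : Fin r, ∑ bb : Fin r, w (i, bb) = max (-v i) 0 := by
      intro i
      simp only [hw]
      rw [← Finset.sum_div, ← Finset.mul_sum, ← hS]
      field_simp
    have hsumw : ∑ p : Fin r × Fin r, w p = S := by
      rw [Fintype.sum_prod_type]
      calc ∑ aa : Fin r, ∑ bb : Fin r, w (aa, bb) = ∑ aa : Fin r, max (-v aa) 0 :=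
            Finset.sum_congr rfl fun aa _ => hwj aa
        _ = S := hSneg
    refine ⟨fun i j => ∑ p : Fin r × Fin r, w p * G p.1 p.2 i j, ?_, ?_, ?_, ?_⟩
    · intro i j
      exact Finset.sum_nonneg fun p _ => mul_nonneg (hw0 p) (hG0 p.1 p.2 i j)
    · intro i j hij
      exact Finset.sum_eq_zero fun p _ => by rw [hGE p.1 p.2 i j hij, mul_zero]
    · intro i
      rw [divg_sum (g := fun (p : Fin r × Fin r) a b => w p * G p.1 p.2 a b) i]
      have hterm : ∀ p : Fin r × Fin r,
          divg (fun a b => w p * G p.1 p.2 a b) i = w p * divg (G p.1 p.2) i := by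
        intro p
        simp [divg, Finset.mul_sum, mul_sub]
      rw [Finset.sum_congr rfl fun p _ => hterm p]
      have h2 : ∀ p : Fin r × Fin r, w p * divg (G p.1 p.2) i =
          (if i = p.2 then w p else 0) - (if i = p.1 then w p else 0) := by
        intro p
        rw [hGd, mul_sub]
        congr 1 <;> rw [mul_ite, mul_one, mul_zero]
      rw [Finset.sum_congr rfl fun p _ => h2 p, Finset.sum_sub_distrib]
      have h3 : ∑ p : Fin r × Fin r, (if i = p.2 then w p else 0) = max (v i) 0 := by
        rw [Fintype.sum_prod_type]
        have hin : ∀ aa : Fin r, (∑ bb : Fin r, if i = bb then w (aa, bb) else 0)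
            = w (aa, i) := by
          intro aa
          rw [Finset.sum_ite_eq Finset.univ i (fun bb => w (aa, bb))]
          simp
        rw [Finset.sum_congr rfl fun aa _ => hin aa, hwi]
      have h4 : ∑ p : Fin r × Fin r, (if i = p.1 then w p else 0) = max (-v i) 0 := by
        rw [Fintype.sum_prod_type]
        have hin : ∀ aa : Fin r, (∑ bb : Fin r, if i = aa then w (aa, bb) else 0)
            = if i = aa then max (-v aa) 0 else 0 := by
          intro aa
          rcases eq_or_ne i aa with h | h
          · simp only [h, if_pos rfl]
            exact hwj aa
          · simp [h]
        rw [Finset.sum_congr rfl fun aa _ => hin aa,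
          Finset.sum_ite_eq Finset.univ i (fun aa => max (-v aa) 0)]
        simp
      rw [h3, h4]
      rcases le_total (v i) 0 with h | h
      · simp [max_eq_right h, max_eq_left (neg_nonneg.mpr h)]
      · simp [max_eq_left h, max_eq_right (neg_nonpos.mpr h)]
    · intro i j
      calc (∑ p : Fin r × Fin r, w p * G p.1 p.2 i j)
          ≤ ∑ p : Fin r × Fin r, w p * N :=
            Finset.sum_le_sum fun p _ =>
              mul_le_mul_of_nonneg_left (hGle p.1 p.2 i j) (hw0 p)
        _ = S * N := by rw [← Finset.sum_mul, hsumw]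
        _ ≤ (∑ k, |v k|) * N := mul_le_mul_of_nonneg_right hSabs hN0
        _ = N * ∑ k, |v k| := mul_comm _ _

end Stmt3Aux

end Routing
namespace Stmt3Aux

lemma log_le_two_sqrt {x : ℝ} (hx : 0 < x) : Real.log x ≤ 2 * Real.sqrt x := by
  have h1 : Real.log x = 2 * Real.log (Real.sqrt x) := by
    rw [Real.log_sqrt hx.le]; ring
  have h2 : Real.log (Real.sqrt x) ≤ Real.sqrt x - 1 :=
    Real.log_le_sub_one_of_pos (Real.sqrt_pos.mpr hx)
  nlinarith [Real.sqrt_nonneg x]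

lemma tauStar_div (x lam : ℝ) :
    tauStar (x / lam - 1) = x / lam * Real.log (x / lam) - (x / lam - 1) := by
  unfold tauStar
  rw [sub_add_cancel]

lemma edge_cost_bound {c C' m mu lam l F : ℝ} (hc : 0 < c) (hm : 0 < m)
    (hmu : m ≤ mu) (hmu1 : mu ≤ 1) (hlam : c ≤ lam) (hlamC : lam ≤ C')
    (hl : 0 ≤ l) (hF : mu * l ≤ F) :
    mu * lam * tauStar (l / lam - 1) ≤ C' + 2 * (F * Real.sqrt F) / Real.sqrt (c * m) := by
  have hlampos : 0 < lam := lt_of_lt_of_le hc hlam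
  have hmupos : 0 < mu := lt_of_lt_of_le hm hmu
  have hF0 : 0 ≤ F := le_trans (mul_nonneg hmupos.le hl) hF
  have hC0 : 0 ≤ C' := le_trans (le_trans hc.le hlam) hlamC
  have hmlC : mu * lam ≤ C' := by nlinarith
  have hRnn : 0 ≤ 2 * (F * Real.sqrt F) / Real.sqrt (c * m) := by positivity
  have hexp : mu * lam * tauStar (l / lam - 1)
      = mu * l * Real.log (l / lam) - mu * l + mu * lam := by
    rw [tauStar_div]
    field_simp
    ring
  rw [hexp]
  have hml0 : 0 ≤ mu * l := mul_nonneg hmupos.le hl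
  rcases le_or_gt l lam with hll | hll
  · have hlog : Real.log (l / lam) ≤ 0 :=
      Real.log_nonpos (by positivity) ((div_le_one hlampos).mpr hll)
    nlinarith
  · -- lam < l
    have hlpos : 0 < l := lt_trans hlampos hll
    have hdpos : 0 < l / lam := div_pos hlpos hlampos
    have hcm : 0 < Real.sqrt (c * m) := Real.sqrt_pos.mpr (mul_pos hc hm)
    have key : mu * l * Real.log (l / lam) ≤ 2 * (F * Real.sqrt F) / Real.sqrt (c * m) := by
      rw [le_div_iff₀ hcm]
      have hscm : Real.sqrt (c * m) = Real.sqrt c * Real.sqrt m := Real.sqrt_mul hc.le m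
      rw [hscm]
      have e1 : mu * l * Real.log (l / lam) * (Real.sqrt c * Real.sqrt m)
          ≤ mu * l * (2 * Real.sqrt (l / lam)) * (Real.sqrt c * Real.sqrt m) := by
        have hlog2 := log_le_two_sqrt hdpos
        have hcm0 : 0 ≤ Real.sqrt c * Real.sqrt m := by positivity
        exact mul_le_mul_of_nonneg_right
          (mul_le_mul_of_nonneg_left hlog2 hml0) hcm0
      have e2 : Real.sqrt (l / lam) * Real.sqrt c = Real.sqrt (l / lam * c) :=
        (Real.sqrt_mul (le_of_lt hdpos) c).symm
      have e3 : l / lam * c ≤ l := by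
        rw [div_mul_eq_mul_div, div_le_iff₀ hlampos]
        nlinarith
      have e4 : Real.sqrt (l / lam * c) ≤ Real.sqrt l := Real.sqrt_le_sqrt e3
      have e5 : Real.sqrt m ≤ Real.sqrt mu := Real.sqrt_le_sqrt hmu
      have e6 : Real.sqrt l * Real.sqrt mu = Real.sqrt (mu * l) := by
        rw [← Real.sqrt_mul hlpos.le, mul_comm]
      have e7 : mu * l * (2 * Real.sqrt (l / lam)) * (Real.sqrt c * Real.sqrt m)
          ≤ 2 * (mu * l) * Real.sqrt (mu * l) := by
        have h1 : Real.sqrt (l / lam) * Real.sqrt c * Real.sqrt m ≤ Real.sqrt (mu * l) := by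
          calc Real.sqrt (l / lam) * Real.sqrt c * Real.sqrt m
              = Real.sqrt (l / lam * c) * Real.sqrt m := by rw [e2]
            _ ≤ Real.sqrt l * Real.sqrt mu := by
                apply mul_le_mul e4 e5 (Real.sqrt_nonneg m) (Real.sqrt_nonneg l)
            _ = Real.sqrt (mu * l) := e6
        nlinarith [Real.sqrt_nonneg (l / lam), Real.sqrt_nonneg c, Real.sqrt_nonneg m,
          Real.sqrt_nonneg (mu * l)]
      have e8 : 2 * (mu * l) * Real.sqrt (mu * l) ≤ 2 * (F * Real.sqrt F) := by
        have h1 : Real.sqrt (mu * l) ≤ Real.sqrt F := Real.sqrt_le_sqrt hF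
        nlinarith [Real.sqrt_nonneg (mu * l)]
      linarith
    nlinarith

end Stmt3Aux
namespace Stmt3Aux

open MeasureTheory Set

variable {r : ℕ}

lemma ae_ne_point (c : ℝ) : ∀ᵐ t : ℝ, t ≠ c := by
  have h : (volume : Measure ℝ) {c} = 0 := measure_singleton c
  exact (MeasureTheory.measure_eq_zero_iff_ae_notMem.mp h).mono (by intro t ht; simpa using ht)

lemma simplex_coord_le_one {x : Fin r → ℝ} (hx : x ∈ stdSimplex ℝ (Fin r)) (i : Fin r) :
    x i ≤ 1 := by
  have h := Finset.single_le_sum (f := x) (fun k _ => hx.1 k) (Finset.mem_univ i)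
  rw [hx.2] at h
  exact h

lemma segment_cost (M : MeanFieldModel r)
    (N : ℝ) (hN0 : 0 ≤ N)
    (hroute : ∀ v : Fin r → ℝ, (∑ i, v i) = 0 →
      ∃ f : Fin r → Fin r → ℝ, (∀ i j, 0 ≤ f i j) ∧ (∀ i j, (i, j) ∉ M.E → f i j = 0) ∧
        (∀ i, divg f i = v i) ∧ (∀ i j, f i j ≤ N * ∑ k, |v k|))
    (x y : Fin r → ℝ) (hx : x ∈ stdSimplex ℝ (Fin r)) (hy : y ∈ stdSimplex ℝ (Fin r))
    (T : ℝ) (hT : 0 < T) (W : ℝ) (hW : ∑ k, |(y k - x k) / T| ≤ W)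
    (m : ℝ → ℝ)
    (hm : ∀ t ∈ Ioo (0:ℝ) T, ∀ i, 0 < m t ∧ m t ≤ x i + t / T * (y i - x i)) :
    SEnd M T x y ≤ ∫⁻ t in Ioc (0:ℝ) T, ENNReal.ofReal
      ((r:ℝ)^2 * (max M.Cb 1 +
        2 * (N * W * Real.sqrt (N * W)) / Real.sqrt (M.c * m t))) := by
  classical
  have hTne : T ≠ 0 := ne_of_gt hT
  set v : Fin r → ℝ := fun i => (y i - x i) / T with hvdef
  have hv : (∑ i, v i) = 0 := by
    simp only [hvdef]
    rw [← Finset.sum_div, Finset.sum_sub_distrib, hx.2, hy.2]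
    simp
  obtain ⟨f, hf0, hfE, hfd, hfb⟩ := hroute v hv
  have hWnn : 0 ≤ W := le_trans (Finset.sum_nonneg fun k _ => abs_nonneg _) hW
  have hfNW : ∀ i j, f i j ≤ N * W := fun i j =>
    le_trans (hfb i j) (mul_le_mul_of_nonneg_left hW hN0)
  have hfdiag : ∀ i, f i i = 0 := fun i => hfE i i (M.no_diag i)
  set μ : ℝ → Fin r → ℝ := fun t i => x i + t / T * (y i - x i) with hμdef
  have hμ0 : μ 0 = x := by funext i; simp [hμdef]
  have hμT : μ T = y := by
    funext i; simp only [hμdef]; rw [div_self hTne]; ring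
  have hμmeas : ∀ i, Measurable fun t => μ t i := by
    intro i
    simp only [hμdef]
    fun_prop
  have hμsimplex : ∀ t ∈ Icc (0:ℝ) T, μ t ∈ stdSimplex ℝ (Fin r) := by
    intro t ht
    have hs0 : 0 ≤ t / T := div_nonneg ht.1 hT.le
    have hs1 : t / T ≤ 1 := (div_le_one hT).mpr ht.2
    have hmem := (convex_stdSimplex ℝ (Fin r)) hx hy (by linarith : (0:ℝ) ≤ 1 - t / T) hs0
      (by ring)
    convert hmem using 1
    funext i
    simp only [Pi.add_apply, Pi.smul_apply, smul_eq_mul, hμdef]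
    ring
  have hμpos : ∀ t ∈ Ioo (0:ℝ) T, ∀ i, 0 < μ t i := by
    intro t ht i
    exact lt_of_lt_of_le (hm t ht i).1 (hm t ht i).2
  set Loff : ℝ → Fin r → Fin r → ℝ :=
    fun t i j => if 0 < μ t i then f i j / μ t i else 0 with hLoffdef
  set L : ℝ → Fin r → Fin r → ℝ := fun t i j =>
    if i = j then -(∑ k ∈ Finset.univ.filter (fun k => k ≠ i), Loff t i k)
    else Loff t i j with hLdef
  have hLoffmeas : ∀ i j, Measurable fun t => Loff t i j := by
    intro i j
    simp only [hLoffdef]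
    have hset : MeasurableSet {t : ℝ | 0 < μ t i} :=
      measurableSet_lt measurable_const (hμmeas i)
    exact Measurable.ite hset (measurable_const.div (hμmeas i)) measurable_const
  have hLoff0 : ∀ t i j, 0 ≤ Loff t i j := by
    intro t i j
    simp only [hLoffdef]
    split
    · exact div_nonneg (hf0 i j) (le_of_lt (by assumption))
    · exact le_rfl
  have hRM : IsRateMatrix M L := by
    refine ⟨?_, ?_, ?_, ?_⟩
    · intro i j
      by_cases h : i = j
      · simp only [hLdef, if_pos h]
        exact (Finset.measurable_sum _ fun k _ => hLoffmeas i k).neg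
      · simp only [hLdef, if_neg h]
        exact hLoffmeas i j
    · intro t i j hij
      simp only [hLdef, if_neg hij]
      exact hLoff0 t i j
    · intro t i j hij hE
      simp only [hLdef, if_neg hij, hLoffdef]
      rw [hfE i j hE]
      split <;> simp
    · intro t i
      simp only [hLdef, if_pos rfl]
      congr 1
      apply Finset.sum_congr rfl
      intro k hk
      have hki : ¬ i = k := fun h => (Finset.mem_filter.mp hk).2 h.symm
      rw [if_neg hki]
  have hLμ : ∀ t, t ∈ Ioo (0:ℝ) T → ∀ i, (∑ j, L t j i * μ t j) = v i := by
    intro t ht i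
    have hpos := hμpos t ht
    have hoff : ∀ j ∈ Finset.univ.erase i, L t j i * μ t j = f j i := by
      intro j hj
      have hji : j ≠ i := (Finset.mem_erase.mp hj).1
      simp only [hLdef, if_neg hji, hLoffdef, if_pos (hpos j)]
      exact div_mul_cancel₀ _ (ne_of_gt (hpos j))
    have hdiagmul : L t i i * μ t i =
        -∑ j ∈ Finset.univ.filter (fun j => j ≠ i), f i j := by
      simp only [hLdef, if_pos rfl]
      rw [neg_mul, Finset.sum_mul]
      congr 1
      apply Finset.sum_congr rfl
      intro k _
      simp only [hLoffdef, if_pos (hpos i)]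
      exact div_mul_cancel₀ _ (ne_of_gt (hpos i))
    have hsum : (∑ j, L t j i * μ t j) =
        L t i i * μ t i + ∑ j ∈ Finset.univ.erase i, f j i := by
      rw [← Finset.add_sum_erase _ _ (Finset.mem_univ i)]
      congr 1
      exact Finset.sum_congr rfl hoff
    rw [hsum, hdiagmul]
    have hdiv := hfd i
    simp only [divg] at hdiv
    have e1 : (∑ j, f j i) = f i i + ∑ j ∈ Finset.univ.erase i, f j i :=
      (Finset.add_sum_erase _ _ (Finset.mem_univ i)).symm
    have e2 : (∑ j, f i j) = f i i + ∑ j ∈ Finset.univ.erase i, f i j :=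
      (Finset.add_sum_erase _ _ (Finset.mem_univ i)).symm
    have e3 : Finset.univ.filter (fun j => j ≠ i) = Finset.univ.erase i :=
      Finset.filter_ne' _ _
    rw [e3]
    rw [e1, e2, hfdiag i] at hdiv
    linarith
  -- ODE in integral form
  have hODE : SolvesODE L μ T := by
    constructor
    · intro i
      have hconst : IntegrableOn (fun _ : ℝ => v i) (Icc 0 T) volume :=
        integrableOn_const measure_Icc_lt_top.ne
      apply hconst.congr_fun_ae
      refine (MeasureTheory.ae_restrict_iff' measurableSet_Icc).mpr ?_
      filter_upwards [ae_ne_point 0, ae_ne_point T] with t h0 hTne' htIcc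
      exact (hLμ t ⟨lt_of_le_of_ne htIcc.1 (Ne.symm h0), lt_of_le_of_ne htIcc.2 hTne'⟩ i).symm
    · intro t ht i
      have hIoc : ∫ s in Ioc (0:ℝ) t, (∑ j, L s j i * μ s j) = ∫ s in Ioc (0:ℝ) t, v i := by
        apply MeasureTheory.setIntegral_congr_ae measurableSet_Ioc
        filter_upwards [ae_ne_point T] with s hsne hs
        exact hLμ s ⟨hs.1, lt_of_le_of_ne (le_trans hs.2 ht.2) hsne⟩ i
      rw [hIoc, MeasureTheory.setIntegral_const, Real.volume_real_Ioc_of_le ht.1]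
      simp only [hμdef, smul_eq_mul, hvdef]
      field_simp
      ring
  -- conclude SEnd ≤ running cost ≤ bound
  refine le_trans (iInf₂_le μ ⟨hμ0, hμT⟩) (le_trans (iInf₂_le L ⟨hRM, hODE, hμ0, hμsimplex⟩) ?_)
  -- running cost bound
  unfold runningCost
  apply MeasureTheory.lintegral_mono_ae
  rw [MeasureTheory.ae_restrict_iff' measurableSet_Ioc]
  filter_upwards [ae_ne_point T] with t htne htIoc
  have htIoo : t ∈ Ioo (0:ℝ) T := ⟨htIoc.1, lt_of_le_of_ne htIoc.2 htne⟩
  apply ENNReal.ofReal_le_ofReal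
  -- bound the sum over edges
  set C' : ℝ := max M.Cb 1 with hC'
  set Fc : ℝ := N * W with hFc
  have hFc0 : 0 ≤ Fc := mul_nonneg hN0 hWnn
  have hedge : ∀ p ∈ M.E,
      μ t p.1 * M.lam p.1 p.2 (μ t) * tauStar (L t p.1 p.2 / M.lam p.1 p.2 (μ t) - 1)
        ≤ C' + 2 * (Fc * Real.sqrt Fc) / Real.sqrt (M.c * m t) := by
    intro p hp
    have hpne : p.1 ≠ p.2 := by
      intro heq
      have h1 : (p.1, p.2) ∈ M.E := by rwa [Prod.mk.eta]
      rw [heq] at h1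
      exact M.no_diag p.2 h1
    have hμt : μ t ∈ stdSimplex ℝ (Fin r) := hμsimplex t ⟨htIoo.1.le, htIoo.2.le⟩
    have hlamlo := M.lam_lower p hp (μ t) hμt
    have hlamhi : M.lam p.1 p.2 (μ t) ≤ C' := le_trans (M.lam_upper p hp (μ t) hμt)
      (le_max_left _ _)
    have hmt := hm t htIoo p.1
    have hLval : L t p.1 p.2 = f p.1 p.2 / μ t p.1 := by
      simp only [hLdef, if_neg hpne, hLoffdef, if_pos (hμpos t htIoo p.1)]
    have hμl : μ t p.1 * L t p.1 p.2 = f p.1 p.2 := by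
      rw [hLval]
      exact mul_div_cancel₀ _ (ne_of_gt (hμpos t htIoo p.1))
    apply edge_cost_bound M.c_pos (hmt.1) hmt.2 (simplex_coord_le_one hμt p.1)
      hlamlo hlamhi ?_ ?_
    · rw [hLval]
      exact div_nonneg (hf0 _ _) (hμpos t htIoo p.1).le
    · rw [hμl]
      exact hfNW _ _
  calc (∑ p ∈ M.E,
      μ t p.1 * M.lam p.1 p.2 (μ t) * tauStar (L t p.1 p.2 / M.lam p.1 p.2 (μ t) - 1))
      ≤ M.E.card • (C' + 2 * (Fc * Real.sqrt Fc) / Real.sqrt (M.c * m t)) :=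
        Finset.sum_le_card_nsmul _ _ _ hedge
    _ ≤ (r:ℝ)^2 * (C' + 2 * (Fc * Real.sqrt Fc) / Real.sqrt (M.c * m t)) := by
        rw [nsmul_eq_mul]
        apply mul_le_mul_of_nonneg_right
        · have h1 : M.E.card ≤ Fintype.card (Fin r × Fin r) := Finset.card_le_univ _
          have h2 : Fintype.card (Fin r × Fin r) = r * r := by simp
          have : (M.E.card : ℝ) ≤ (r * r : ℕ) := by exact_mod_cast h1.trans_eq h2
          calc (M.E.card : ℝ) ≤ (r * r : ℕ) := this
            _ = (r:ℝ)^2 := by push_cast; ring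
        · have h1 : (1:ℝ) ≤ C' := le_max_right _ _
          have h2 : (0:ℝ) ≤ 2 * (Fc * Real.sqrt Fc) / Real.sqrt (M.c * m t) := by positivity
          linarith

end Stmt3Aux
namespace Stmt3Aux

open MeasureTheory Set

lemma base_eqOn (K B ρ : ℝ) (hρ : 0 < ρ) :
    Set.EqOn (fun t : ℝ => K + B * t ^ (-(1/2) : ℝ)) (fun t => K + B / Real.sqrt t)
      (Set.uIcc 0 ρ) := by
  intro t ht
  rw [Set.uIcc_of_le hρ.le] at ht
  rcases eq_or_lt_of_le ht.1 with h0 | h0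
  · simp [← h0, Real.zero_rpow (by norm_num : (-(1/2) : ℝ) ≠ 0)]
  · simp only
    rw [Real.rpow_neg h0.le, ← Real.sqrt_eq_rpow, ← div_eq_mul_inv]

lemma base_intervalIntegrable (K B ρ : ℝ) (hρ : 0 < ρ) :
    IntervalIntegrable (fun t : ℝ => K + B / Real.sqrt t) volume 0 ρ := by
  have h1 : IntervalIntegrable (fun t : ℝ => K + B * t ^ (-(1/2) : ℝ)) volume 0 ρ :=
    intervalIntegrable_const.add
      ((intervalIntegral.intervalIntegrable_rpow' (by norm_num)).const_mul B)
  apply h1.congr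
  intro t ht
  exact base_eqOn K B ρ hρ (Set.uIoc_subset_uIcc ht)

lemma base_integral (K B ρ : ℝ) (hρ : 0 < ρ) :
    ∫ t in (0:ℝ)..ρ, (K + B / Real.sqrt t) = K * ρ + B * (2 * Real.sqrt ρ) := by
  rw [← intervalIntegral.integral_congr (base_eqOn K B ρ hρ)]
  rw [intervalIntegral.integral_add intervalIntegrable_const
    ((intervalIntegral.intervalIntegrable_rpow' (by norm_num)).const_mul B)]
  rw [intervalIntegral.integral_const, intervalIntegral.integral_const_mul,
    integral_rpow (Or.inl (by norm_num : (-1:ℝ) < -(1/2)))]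
  rw [Real.zero_rpow (by norm_num : (-(1/2) : ℝ) + 1 ≠ 0), Real.sqrt_eq_rpow]
  norm_num
  ring

lemma lint_sqrt (K B ρ : ℝ) (hK : 0 ≤ K) (hB : 0 ≤ B) (hρ : 0 < ρ) :
    ∫⁻ t in Ioc (0:ℝ) ρ, ENNReal.ofReal (K + B / Real.sqrt t)
      ≤ ENNReal.ofReal (K * ρ + B * (2 * Real.sqrt ρ)) := by
  have hint : IntegrableOn (fun t : ℝ => K + B / Real.sqrt t) (Ioc 0 ρ) volume :=
    (intervalIntegrable_iff_integrableOn_Ioc_of_le hρ.le).mp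
      (base_intervalIntegrable K B ρ hρ)
  have hnn : 0 ≤ᵐ[volume.restrict (Ioc (0:ℝ) ρ)] fun t => K + B / Real.sqrt t := by
    refine Filter.Eventually.of_forall fun t => ?_
    have : 0 ≤ B / Real.sqrt t := div_nonneg hB (Real.sqrt_nonneg t)
    simp only [Pi.zero_apply]
    linarith
  rw [← MeasureTheory.ofReal_integral_eq_lintegral_ofReal hint hnn]
  apply ENNReal.ofReal_le_ofReal
  rw [← intervalIntegral.integral_of_le hρ.le, base_integral K B ρ hρ]

lemma lint_sqrt_rev (K B ρ : ℝ) (hK : 0 ≤ K) (hB : 0 ≤ B) (hρ : 0 < ρ) :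
    ∫⁻ t in Ioc (0:ℝ) ρ, ENNReal.ofReal (K + B / Real.sqrt (ρ - t))
      ≤ ENNReal.ofReal (K * ρ + B * (2 * Real.sqrt ρ)) := by
  have hii : IntervalIntegrable (fun t : ℝ => K + B / Real.sqrt (ρ - t)) volume 0 ρ := by
    have := ((base_intervalIntegrable K B ρ hρ).comp_sub_left ρ).symm
    simpa using this
  have hint : IntegrableOn (fun t : ℝ => K + B / Real.sqrt (ρ - t)) (Ioc 0 ρ) volume :=
    (intervalIntegrable_iff_integrableOn_Ioc_of_le hρ.le).mp hii
  have hnn : 0 ≤ᵐ[volume.restrict (Ioc (0:ℝ) ρ)]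
      fun t => K + B / Real.sqrt (ρ - t) := by
    refine Filter.Eventually.of_forall fun t => ?_
    have : 0 ≤ B / Real.sqrt (ρ - t) := div_nonneg hB (Real.sqrt_nonneg _)
    simp only [Pi.zero_apply]
    linarith
  rw [← MeasureTheory.ofReal_integral_eq_lintegral_ofReal hint hnn]
  apply ENNReal.ofReal_le_ofReal
  rw [← intervalIntegral.integral_of_le hρ.le]
  have := intervalIntegral.integral_comp_sub_left (fun t : ℝ => K + B / Real.sqrt t) ρ
    (a := 0) (b := ρ)
  simp only [sub_self, sub_zero] at this
  rw [this, base_integral K B ρ hρ]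

lemma lint_const (K T : ℝ) (hK : 0 ≤ K) :
    ∫⁻ t in Ioc (0:ℝ) T, ENNReal.ofReal K ≤ ENNReal.ofReal (K * T) := by
  rw [MeasureTheory.setLIntegral_const, Real.volume_Ioc, sub_zero]
  exact le_of_eq (ENNReal.ofReal_mul hK).symm

end Stmt3Aux
namespace Stmt3Aux

open MeasureTheory Set

variable {r : ℕ}

lemma SEnd_le_runningCost (M : MeanFieldModel r) {T : ℝ} {ν ξ : Fin r → ℝ}
    {μ : ℝ → Fin r → ℝ} {L : ℝ → Fin r → Fin r → ℝ}
    (hRM : IsRateMatrix M L) (hODE : SolvesODE L μ T) (h0 : μ 0 = ν) (hT : μ T = ξ)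
    (hS : ∀ t ∈ Icc (0:ℝ) T, μ t ∈ stdSimplex ℝ (Fin r)) :
    SEnd M T ν ξ ≤ runningCost M μ L T :=
  le_trans (iInf₂_le μ ⟨h0, hT⟩) (iInf₂_le L ⟨hRM, hODE, h0, hS⟩)

lemma combine_cost (M : MeanFieldModel r) {T₁ T₂ : ℝ} (h₁ : 0 < T₁) (h₂ : 0 < T₂)
    {ν κ ξ : Fin r → ℝ} {μ₁ μ₂ : ℝ → Fin r → ℝ} {L₁ L₂ : ℝ → Fin r → Fin r → ℝ}
    (hA₁ : IsRateMatrix M L₁) (hB₁ : SolvesODE L₁ μ₁ T₁) (h01 : μ₁ 0 = ν)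
    (hS₁ : ∀ t ∈ Icc (0:ℝ) T₁, μ₁ t ∈ stdSimplex ℝ (Fin r)) (hT1 : μ₁ T₁ = κ)
    (hA₂ : IsRateMatrix M L₂) (hB₂ : SolvesODE L₂ μ₂ T₂) (h02 : μ₂ 0 = κ)
    (hS₂ : ∀ t ∈ Icc (0:ℝ) T₂, μ₂ t ∈ stdSimplex ℝ (Fin r)) (hT2 : μ₂ T₂ = ξ) :
    SEnd M (T₁ + T₂) ν ξ ≤ runningCost M μ₁ L₁ T₁ + runningCost M μ₂ L₂ T₂ := by
  classical
  set μ : ℝ → Fin r → ℝ := fun t => if t ≤ T₁ then μ₁ t else μ₂ (t - T₁) with hμdef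
  set L : ℝ → Fin r → Fin r → ℝ := fun t => if t ≤ T₁ then L₁ t else L₂ (t - T₁) with hLdef
  have hμ0 : μ 0 = ν := by simp only [hμdef, if_pos h₁.le]; exact h01
  have hμT : μ (T₁ + T₂) = ξ := by
    have h : ¬ (T₁ + T₂ ≤ T₁) := by linarith
    simp only [hμdef, if_neg h, add_sub_cancel_left]
    exact hT2
  have hRM : IsRateMatrix M L := by
    refine ⟨?_, ?_, ?_, ?_⟩
    · intro i j
      have : (fun t => L t i j) = fun t =>
          if t ≤ T₁ then L₁ t i j else L₂ (t - T₁) i j := by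
        funext t; simp only [hLdef]; split <;> rfl
      rw [this]
      exact Measurable.ite measurableSet_Iic (hA₁.1 i j)
        ((hA₂.1 i j).comp (measurable_id.sub_const T₁))
    · intro t i j hij
      simp only [hLdef]; split
      · exact hA₁.2.1 t i j hij
      · exact hA₂.2.1 _ i j hij
    · intro t i j hij hE
      simp only [hLdef]; split
      · exact hA₁.2.2.1 t i j hij hE
      · exact hA₂.2.2.1 _ i j hij hE
    · intro t i
      simp only [hLdef]; split
      · exact hA₁.2.2.2 t i
      · exact hA₂.2.2.2 _ i
  have hgeq₁ : ∀ t ≤ T₁, ∀ i, (∑ j, L t j i * μ t j) = ∑ j, L₁ t j i * μ₁ t j := by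
    intro t ht i
    apply Finset.sum_congr rfl
    intro j _
    simp only [hμdef, hLdef, if_pos ht]
  have hgeq₂ : ∀ t, T₁ < t → ∀ i,
      (∑ j, L t j i * μ t j) = ∑ j, L₂ (t - T₁) j i * μ₂ (t - T₁) j := by
    intro t ht i
    apply Finset.sum_congr rfl
    intro j _
    simp only [hμdef, hLdef, if_neg (not_le.mpr ht)]
  have hint₂' : ∀ i, IntegrableOn (fun t => ∑ j, L₂ (t - T₁) j i * μ₂ (t - T₁) j)
      (Icc T₁ (T₁ + T₂)) volume := by
    intro i
    have h1 : Integrable ((Icc (0:ℝ) T₂).indicator fun t => ∑ j, L₂ t j i * μ₂ t j) volume :=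
      (integrable_indicator_iff measurableSet_Icc).mpr (hB₂.1 i)
    have h2 := h1.comp_sub_right T₁
    have h3 : (fun t => ((Icc (0:ℝ) T₂).indicator fun s => ∑ j, L₂ s j i * μ₂ s j) (t - T₁))
        = (Icc T₁ (T₁ + T₂)).indicator fun t => ∑ j, L₂ (t - T₁) j i * μ₂ (t - T₁) j := by
      funext t
      have hmem : t - T₁ ∈ Icc (0:ℝ) T₂ ↔ t ∈ Icc T₁ (T₁ + T₂) := by
        constructor
        · intro h; exact ⟨by linarith [h.1], by linarith [h.2]⟩
        · intro h; exact ⟨by linarith [h.1], by linarith [h.2]⟩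
      by_cases h : t ∈ Icc T₁ (T₁ + T₂)
      · rw [Set.indicator_of_mem h, Set.indicator_of_mem (hmem.mpr h)]
      · rw [Set.indicator_of_notMem h, Set.indicator_of_notMem (fun hc => h (hmem.mp hc))]
    rw [h3] at h2
    exact (integrable_indicator_iff measurableSet_Icc).mp h2
  have hODE : SolvesODE L μ (T₁ + T₂) := by
    constructor
    · intro i
      have hsplit : Icc (0:ℝ) (T₁ + T₂) = Icc 0 T₁ ∪ Icc T₁ (T₁ + T₂) :=
        (Set.Icc_union_Icc_eq_Icc h₁.le (by linarith)).symm
      rw [hsplit]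
      apply MeasureTheory.IntegrableOn.union
      · exact (hB₁.1 i).congr_fun (fun t ht => (hgeq₁ t ht.2 i).symm) measurableSet_Icc
      · apply (hint₂' i).congr_fun_ae
        refine (ae_restrict_iff' measurableSet_Icc).mpr ?_
        filter_upwards [ae_ne_point T₁] with t htne htmem
        exact (hgeq₂ t (lt_of_le_of_ne htmem.1 (Ne.symm htne)) i).symm
    · intro t ht i
      by_cases htT : t ≤ T₁
      · have he : ∫ s in Ioc (0:ℝ) t, (∑ j, L s j i * μ s j)
            = ∫ s in Ioc (0:ℝ) t, (∑ j, L₁ s j i * μ₁ s j) := by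
          apply MeasureTheory.setIntegral_congr_ae measurableSet_Ioc
          exact Filter.Eventually.of_forall fun s hs => hgeq₁ s (le_trans hs.2 htT) i
        have hval := hB₁.2 t ⟨ht.1, htT⟩ i
        rw [he]
        simp only [hμdef, if_pos htT, if_pos h₁.le]
        exact hval
      · push_neg at htT
        have htub : t ≤ T₁ + T₂ := ht.2
        have hIocsplit : Ioc (0:ℝ) t = Ioc 0 T₁ ∪ Ioc T₁ t :=
          (Set.Ioc_union_Ioc_eq_Ioc h₁.le htT.le).symm
        have hint_a : IntegrableOn (fun s => ∑ j, L s j i * μ s j) (Ioc 0 T₁) volume := by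
          apply IntegrableOn.congr_fun ((hB₁.1 i).mono_set Set.Ioc_subset_Icc_self)
            (fun s hs => (hgeq₁ s hs.2 i).symm) measurableSet_Ioc
        have hint_b : IntegrableOn (fun s => ∑ j, L s j i * μ s j) (Ioc T₁ t) volume := by
          apply IntegrableOn.congr_fun
            (((hint₂' i).mono_set ?_))
            (fun s hs => (hgeq₂ s hs.1 i).symm) measurableSet_Ioc
          exact fun s hs => ⟨hs.1.le, le_trans hs.2 htub⟩
        have hsplit : ∫ s in Ioc (0:ℝ) t, (∑ j, L s j i * μ s j)
            = (∫ s in Ioc (0:ℝ) T₁, (∑ j, L s j i * μ s j))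
              + ∫ s in Ioc T₁ t, (∑ j, L s j i * μ s j) := by
          rw [hIocsplit]
          exact MeasureTheory.setIntegral_union (Set.Ioc_disjoint_Ioc_of_le le_rfl)
            measurableSet_Ioc hint_a hint_b
        have he1 : ∫ s in Ioc (0:ℝ) T₁, (∑ j, L s j i * μ s j)
            = ∫ s in Ioc (0:ℝ) T₁, (∑ j, L₁ s j i * μ₁ s j) := by
          apply MeasureTheory.setIntegral_congr_ae measurableSet_Ioc
          exact Filter.Eventually.of_forall fun s hs => hgeq₁ s hs.2 i
        have he2 : ∫ s in Ioc T₁ t, (∑ j, L s j i * μ s j)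
            = ∫ s in Ioc (0:ℝ) (t - T₁), (∑ j, L₂ s j i * μ₂ s j) := by
          have e1 : ∫ s in Ioc T₁ t, (∑ j, L s j i * μ s j)
              = ∫ s in Ioc T₁ t, (∑ j, L₂ (s - T₁) j i * μ₂ (s - T₁) j) := by
            apply MeasureTheory.setIntegral_congr_ae measurableSet_Ioc
            exact Filter.Eventually.of_forall fun s hs => hgeq₂ s hs.1 i
          rw [e1, ← intervalIntegral.integral_of_le htT.le,
            intervalIntegral.integral_comp_sub_right
              (fun s => ∑ j, L₂ s j i * μ₂ s j) T₁, sub_self,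
            intervalIntegral.integral_of_le (by linarith : (0:ℝ) ≤ t - T₁)]
        have hval₂ := hB₂.2 (t - T₁) ⟨by linarith, by linarith⟩ i
        have hκ := hB₁.2 T₁ ⟨h₁.le, le_rfl⟩ i
        have hμt : μ t i = μ₂ (t - T₁) i := by
          simp only [hμdef, if_neg (not_le.mpr htT)]
        have hμ0' : μ 0 i = μ₁ 0 i := by simp only [hμdef, if_pos h₁.le]
        have hμ20 : μ₂ 0 i = μ₁ T₁ i := by rw [h02, ← hT1]
        rw [hμt, hval₂, hsplit, he1, he2, hμ0', hμ20, hκ]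
        ring
  have hSimp : ∀ t ∈ Icc (0:ℝ) (T₁ + T₂), μ t ∈ stdSimplex ℝ (Fin r) := by
    intro t ht
    by_cases htT : t ≤ T₁
    · simp only [hμdef, if_pos htT]; exact hS₁ t ⟨ht.1, htT⟩
    · push_neg at htT
      simp only [hμdef, if_neg (not_le.mpr htT)]
      exact hS₂ (t - T₁) ⟨by linarith, by linarith [ht.2]⟩
  refine le_trans (SEnd_le_runningCost M hRM hODE hμ0 hμT hSimp) (le_of_eq ?_)
  -- cost splits
  unfold runningCost
  have hIocsplit : Ioc (0:ℝ) (T₁ + T₂) = Ioc 0 T₁ ∪ Ioc T₁ (T₁ + T₂) :=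
    (Set.Ioc_union_Ioc_eq_Ioc h₁.le (by linarith)).symm
  rw [hIocsplit, lintegral_union measurableSet_Ioc (Set.Ioc_disjoint_Ioc_of_le le_rfl)]
  congr 1
  · apply MeasureTheory.setLIntegral_congr_fun measurableSet_Ioc
    refine fun t ht => ?_
    simp only [hμdef, hLdef, if_pos ht.2]
  · -- shift
    have e1 : ∫⁻ t in Ioc T₁ (T₁ + T₂), ENNReal.ofReal (∑ p ∈ M.E,
          μ t p.1 * M.lam p.1 p.2 (μ t) * tauStar (L t p.1 p.2 / M.lam p.1 p.2 (μ t) - 1))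
        = ∫⁻ t in Ioc T₁ (T₁ + T₂), ENNReal.ofReal (∑ p ∈ M.E,
          μ₂ (t - T₁) p.1 * M.lam p.1 p.2 (μ₂ (t - T₁)) *
            tauStar (L₂ (t - T₁) p.1 p.2 / M.lam p.1 p.2 (μ₂ (t - T₁)) - 1)) := by
      apply MeasureTheory.setLIntegral_congr_fun measurableSet_Ioc
      refine fun t ht => ?_
      simp only [hμdef, hLdef, if_neg (not_le.mpr ht.1)]
    rw [e1]
    set h : ℝ → ℝ≥0∞ := fun s => ENNReal.ofReal (∑ p ∈ M.E,
      μ₂ s p.1 * M.lam p.1 p.2 (μ₂ s) * tauStar (L₂ s p.1 p.2 / M.lam p.1 p.2 (μ₂ s) - 1))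
      with hh
    have e2 : ∫⁻ t in Ioc T₁ (T₁ + T₂), h (t - T₁) = ∫⁻ s in Ioc (0:ℝ) T₂, h s := by
      rw [← lintegral_indicator measurableSet_Ioc, ← lintegral_indicator measurableSet_Ioc]
      have e3 : ∀ t : ℝ, (Ioc T₁ (T₁ + T₂)).indicator (fun t => h (t - T₁)) t
          = ((Ioc (0:ℝ) T₂).indicator h) (t - T₁) := by
        intro t
        have hmem : t - T₁ ∈ Ioc (0:ℝ) T₂ ↔ t ∈ Ioc T₁ (T₁ + T₂) := by
          constructor
          · intro hmm; exact ⟨by linarith [hmm.1], by linarith [hmm.2]⟩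
          · intro hmm; exact ⟨by linarith [hmm.1], by linarith [hmm.2]⟩
        by_cases hmm : t ∈ Ioc T₁ (T₁ + T₂)
        · rw [Set.indicator_of_mem hmm, Set.indicator_of_mem (hmem.mpr hmm)]
        · rw [Set.indicator_of_notMem hmm,
            Set.indicator_of_notMem (fun hc => hmm (hmem.mp hc))]
      calc ∫⁻ t, (Ioc T₁ (T₁ + T₂)).indicator (fun t => h (t - T₁)) t
          = ∫⁻ t, ((Ioc (0:ℝ) T₂).indicator h) (t - T₁) := by
            exact lintegral_congr e3
        _ = ∫⁻ t, ((Ioc (0:ℝ) T₂).indicator h) (t + (-T₁)) := by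
            simp only [sub_eq_add_neg]
        _ = ∫⁻ s, ((Ioc (0:ℝ) T₂).indicator h) s :=
            lintegral_add_right_eq_self _ (-T₁)
    exact e2

lemma SEnd_concat (M : MeanFieldModel r) {T₁ T₂ : ℝ} (h₁ : 0 < T₁) (h₂ : 0 < T₂)
    (ν κ ξ : Fin r → ℝ) :
    SEnd M (T₁ + T₂) ν ξ ≤ SEnd M T₁ ν κ + SEnd M T₂ κ ξ := by
  by_cases hne1 : SEnd M T₁ ν κ = ⊤
  · rw [hne1]; simp
  by_cases hne2 : SEnd M T₂ κ ξ = ⊤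
  · rw [hne2]; simp
  refine ENNReal.le_of_forall_pos_le_add fun η hη _ => ?_
  have hη2 : ((η : ℝ≥0∞) / 2) ≠ 0 := by
    simp [ENNReal.div_eq_zero_iff]
    exact_mod_cast hη.ne'
  have hlt1 : SEnd M T₁ ν κ < SEnd M T₁ ν κ + (η : ℝ≥0∞) / 2 :=
    ENNReal.lt_add_right hne1 hη2
  have hlt2 : SEnd M T₂ κ ξ < SEnd M T₂ κ ξ + (η : ℝ≥0∞) / 2 :=
    ENNReal.lt_add_right hne2 hη2
  rw [SEnd, iInf_lt_iff] at hlt1 hlt2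
  obtain ⟨μ₁, hμ₁⟩ := hlt1
  obtain ⟨μ₂, hμ₂⟩ := hlt2
  rw [iInf_lt_iff] at hμ₁ hμ₂
  obtain ⟨⟨h01, hT1⟩, hμ₁⟩ := hμ₁
  obtain ⟨⟨h02, hT2⟩, hμ₂⟩ := hμ₂
  rw [SPath, iInf_lt_iff] at hμ₁ hμ₂
  obtain ⟨L₁, hμ₁⟩ := hμ₁
  obtain ⟨L₂, hμ₂⟩ := hμ₂
  rw [iInf_lt_iff] at hμ₁ hμ₂
  obtain ⟨⟨hA₁, hB₁, _, hS₁⟩, hc₁⟩ := hμ₁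
  obtain ⟨⟨hA₂, hB₂, _, hS₂⟩, hc₂⟩ := hμ₂
  calc SEnd M (T₁ + T₂) ν ξ
      ≤ runningCost M μ₁ L₁ T₁ + runningCost M μ₂ L₂ T₂ :=
        combine_cost M h₁ h₂ hA₁ hB₁ h01 hS₁ hT1 hA₂ hB₂ h02 hS₂ hT2
    _ ≤ (SEnd M T₁ ν κ + (η : ℝ≥0∞) / 2) + (SEnd M T₂ κ ξ + (η : ℝ≥0∞) / 2) :=
        add_le_add hc₁.le hc₂.le
    _ = SEnd M T₁ ν κ + SEnd M T₂ κ ξ + ((η : ℝ≥0∞) / 2 + (η : ℝ≥0∞) / 2) := by ring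
    _ = SEnd M T₁ ν κ + SEnd M T₂ κ ξ + η := by rw [ENNReal.add_halves]

end Stmt3Aux
namespace Stmt3Aux

open MeasureTheory Set

variable {r : ℕ}

set_option maxHeartbeats 1000000

lemma key_connect (M : MeanFieldModel r) (hr : 0 < r) :
    ∀ ε : ℝ, 0 < ε → ∃ δ : ℝ, 0 < δ ∧
      ∀ a ∈ stdSimplex ℝ (Fin r), ∀ b ∈ stdSimplex ℝ (Fin r), dist a b < δ →
        ∃ T : ℝ, 0 < T ∧ SEnd M T a b ≤ ENNReal.ofReal ε := by
  classical
  obtain ⟨N, hN0, hroute⟩ := exists_routing M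
  intro ε hε
  have hrR : (0:ℝ) < r := by exact_mod_cast hr
  have hC'1 : (1:ℝ) ≤ max M.Cb 1 := le_max_right _ _
  have hc := M.c_pos
  set K₁ : ℝ := (r:ℝ)^2 * max M.Cb 1 with hK₁
  have hK₁0 : 0 ≤ K₁ := by positivity
  set B₁ : ℝ := (r:ℝ)^2 * (2 * (N * 2 * Real.sqrt (N * 2)) / Real.sqrt (M.c / r)) with hB₁
  have hB₁0 : 0 ≤ B₁ := by positivity
  set Q : ℝ := K₁ + B₁ * 2 + 1 with hQ
  have hQ0 : 0 < Q := by positivity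
  set ρ : ℝ := min 1 ((ε / (3 * Q))^2) with hρdef
  have hρpos : 0 < ρ := lt_min one_pos (by positivity)
  have hρ1 : ρ ≤ 1 := min_le_left _ _
  have hendbd : K₁ * ρ + B₁ * (2 * Real.sqrt ρ) ≤ ε / 3 := by
    have h1 : Real.sqrt ρ ≤ ε / (3 * Q) := by
      have h2 := Real.sqrt_le_sqrt (min_le_right 1 ((ε / (3 * Q))^2))
      rwa [Real.sqrt_sq (by positivity)] at h2
    have hρsq : ρ ≤ Real.sqrt ρ := by
      nth_rewrite 1 [show ρ = Real.sqrt (ρ^2) from (Real.sqrt_sq hρpos.le).symm]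
      exact Real.sqrt_le_sqrt (by nlinarith)
    have h3 : K₁ * ρ + B₁ * (2 * Real.sqrt ρ) ≤ Q * Real.sqrt ρ := by
      rw [hQ]
      nlinarith [Real.sqrt_nonneg ρ]
    have h4 : Q * Real.sqrt ρ ≤ Q * (ε / (3 * Q)) := mul_le_mul_of_nonneg_left h1 hQ0.le
    have h5 : Q * (ε / (3 * Q)) = ε / 3 := by field_simp
    exact le_trans h3 (le_trans h4 (le_of_eq h5))
  set D₂ : ℝ := (r:ℝ)^2 * (max M.Cb 1 +
    2 * (N * r * Real.sqrt (N * r)) / Real.sqrt (M.c * (ρ / r))) with hD₂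
  have hD₂0 : 0 ≤ D₂ := by positivity
  set δ : ℝ := min 1 (ε / (3 * (D₂ + 1))) with hδdef
  have hδpos : 0 < δ := lt_min one_pos (by positivity)
  have hmidbd : D₂ * δ ≤ ε / 3 := by
    have h1 : δ ≤ ε / (3 * (D₂ + 1)) := min_le_right _ _
    calc D₂ * δ ≤ D₂ * (ε / (3 * (D₂ + 1))) := mul_le_mul_of_nonneg_left h1 hD₂0
      _ ≤ (D₂ + 1) * (ε / (3 * (D₂ + 1))) :=
          mul_le_mul_of_nonneg_right (by linarith) (by positivity)
      _ = ε / 3 := by field_simp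
  refine ⟨δ, hδpos, ?_⟩
  intro a ha b hb hab
  set A : Fin r → ℝ := fun i => a i + ρ * (1 / r - a i) with hA
  set B : Fin r → ℝ := fun i => b i + ρ * (1 / r - b i) with hB
  have hsum1r : (∑ _i : Fin r, (1:ℝ) / r) = 1 := by
    rw [Finset.sum_const, Finset.card_univ, Fintype.card_fin, nsmul_eq_mul]
    field_simp
  have hmid : ∀ (x : Fin r → ℝ), x ∈ stdSimplex ℝ (Fin r) →
      (fun i => x i + ρ * (1 / r - x i)) ∈ stdSimplex ℝ (Fin r) := by
    intro x hx
    constructor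
    · intro i
      show 0 ≤ x i + ρ * (1 / (r:ℝ) - x i)
      have h2 := hx.1 i
      have h4 : 0 ≤ (1 - ρ) * x i := mul_nonneg (by linarith) h2
      have h5 : 0 ≤ ρ * (1 / (r:ℝ)) := by positivity
      nlinarith
    · simp only
      rw [Finset.sum_add_distrib, hx.2, ← Finset.mul_sum, Finset.sum_sub_distrib,
        hsum1r, hx.2]
      ring
  have hAsimp : A ∈ stdSimplex ℝ (Fin r) := hmid a ha
  have hBsimp : B ∈ stdSimplex ℝ (Fin r) := hmid b hb
  have habscoef : ∀ (x : Fin r → ℝ), x ∈ stdSimplex ℝ (Fin r) →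
      (∑ k, |1 / (r:ℝ) - x k|) ≤ 2 := by
    intro x hx
    calc (∑ k, |1 / (r:ℝ) - x k|) ≤ ∑ k, (1 / (r:ℝ) + x k) := by
          apply Finset.sum_le_sum
          intro k _
          have h1 := hx.1 k
          have h2 : (0:ℝ) ≤ 1 / (r:ℝ) := by positivity
          exact abs_le.mpr ⟨by linarith, by linarith⟩
      _ = 2 := by rw [Finset.sum_add_distrib, hsum1r, hx.2]; norm_num
  -- segment 1 : a → A
  have hseg1 : SEnd M ρ a A ≤ ENNReal.ofReal (ε / 3) := by
    have hW : (∑ k, |(A k - a k) / ρ|) ≤ 2 := by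
      have he : ∀ k, (A k - a k) / ρ = 1 / r - a k := by
        intro k; simp only [hA]; field_simp; ring
      calc (∑ k, |(A k - a k) / ρ|) = ∑ k, |1 / (r:ℝ) - a k| :=
            Finset.sum_congr rfl fun k _ => by rw [he]
        _ ≤ 2 := habscoef a ha
    have hm : ∀ t ∈ Ioo (0:ℝ) ρ, ∀ i,
        0 < t / (r:ℝ) ∧ t / (r:ℝ) ≤ a i + t / ρ * (A i - a i) := by
      intro t ht i
      refine ⟨div_pos ht.1 hrR, ?_⟩
      have he : a i + t / ρ * (A i - a i) = (1 - t) * a i + t * (1 / r) := by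
        simp only [hA]
        field_simp
        ring
      rw [he]
      have h1 : 0 ≤ (1 - t) * a i :=
        mul_nonneg (by linarith [ht.2]) (ha.1 i)
      have h2 : t * (1 / (r:ℝ)) = t / r := by ring
      linarith
    have hcost := segment_cost M N hN0 hroute a A ha hAsimp ρ hρpos 2 hW
      (fun t => t / (r:ℝ)) hm
    have hrw : ∀ t : ℝ, (r:ℝ)^2 * (max M.Cb 1 +
        2 * (N * 2 * Real.sqrt (N * 2)) / Real.sqrt (M.c * (t / r)))
        = K₁ + B₁ / Real.sqrt t := by
      intro t
      have h1 : M.c * (t / r) = M.c / r * t := by ring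
      rw [h1, Real.sqrt_mul (by positivity : (0:ℝ) ≤ M.c / r), mul_add]
      congr 1
      rw [← div_div, ← mul_div_assoc]
    calc SEnd M ρ a A ≤ _ := hcost
      _ = ∫⁻ t in Ioc (0:ℝ) ρ, ENNReal.ofReal (K₁ + B₁ / Real.sqrt t) := by
          apply MeasureTheory.setLIntegral_congr_fun measurableSet_Ioc
          exact fun t _ => by rw [hrw t]
      _ ≤ ENNReal.ofReal (K₁ * ρ + B₁ * (2 * Real.sqrt ρ)) :=
          lint_sqrt K₁ B₁ ρ hK₁0 hB₁0 hρpos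
      _ ≤ ENNReal.ofReal (ε / 3) := ENNReal.ofReal_le_ofReal hendbd
  -- segment 3 : B → b
  have hseg3 : SEnd M ρ B b ≤ ENNReal.ofReal (ε / 3) := by
    have hW : (∑ k, |(b k - B k) / ρ|) ≤ 2 := by
      have he : ∀ k, (b k - B k) / ρ = -(1 / r - b k) := by
        intro k; simp only [hB]; field_simp; ring
      calc (∑ k, |(b k - B k) / ρ|) = ∑ k, |1 / (r:ℝ) - b k| :=
            Finset.sum_congr rfl fun k _ => by rw [he, abs_neg]
        _ ≤ 2 := habscoef b hb
    have hm : ∀ t ∈ Ioo (0:ℝ) ρ, ∀ i,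
        0 < (ρ - t) / (r:ℝ) ∧ (ρ - t) / (r:ℝ) ≤ B i + t / ρ * (b i - B i) := by
      intro t ht i
      refine ⟨div_pos (by linarith [ht.2]) hrR, ?_⟩
      have he : B i + t / ρ * (b i - B i) = (1 - (ρ - t)) * b i + (ρ - t) * (1 / r) := by
        simp only [hB]
        field_simp
        ring
      rw [he]
      have h1 : 0 ≤ (1 - (ρ - t)) * b i :=
        mul_nonneg (by linarith [ht.1]) (hb.1 i)
      have h2 : (ρ - t) * (1 / (r:ℝ)) = (ρ - t) / r := by ring
      linarith
    have hcost := segment_cost M N hN0 hroute B b hBsimp hb ρ hρpos 2 hW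
      (fun t => (ρ - t) / (r:ℝ)) hm
    have hrw : ∀ t : ℝ, (r:ℝ)^2 * (max M.Cb 1 +
        2 * (N * 2 * Real.sqrt (N * 2)) / Real.sqrt (M.c * ((ρ - t) / r)))
        = K₁ + B₁ / Real.sqrt (ρ - t) := by
      intro t
      have h1 : M.c * ((ρ - t) / r) = M.c / r * (ρ - t) := by ring
      rw [h1, Real.sqrt_mul (by positivity : (0:ℝ) ≤ M.c / r), mul_add]
      congr 1
      rw [← div_div, ← mul_div_assoc]
    calc SEnd M ρ B b ≤ _ := hcost
      _ = ∫⁻ t in Ioc (0:ℝ) ρ, ENNReal.ofReal (K₁ + B₁ / Real.sqrt (ρ - t)) := by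
          apply MeasureTheory.setLIntegral_congr_fun measurableSet_Ioc
          exact fun t _ => by rw [hrw t]
      _ ≤ ENNReal.ofReal (K₁ * ρ + B₁ * (2 * Real.sqrt ρ)) :=
          lint_sqrt_rev K₁ B₁ ρ hK₁0 hB₁0 hρpos
      _ ≤ ENNReal.ofReal (ε / 3) := ENNReal.ofReal_le_ofReal hendbd
  -- segment 2 : A → B
  have hseg2 : SEnd M δ A B ≤ ENNReal.ofReal (ε / 3) := by
    have hW : (∑ k, |(B k - A k) / δ|) ≤ (r:ℝ) := by
      have hk : ∀ k, |(B k - A k) / δ| ≤ 1 := by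
        intro k
        have he : B k - A k = (1 - ρ) * (b k - a k) := by
          simp only [hA, hB]; ring
        have hdk : |a k - b k| ≤ dist a b := by
          have := dist_le_pi_dist a b k
          rwa [Real.dist_eq] at this
        have habk : |b k - a k| ≤ δ := by
          rw [abs_sub_comm]
          linarith [hab]
        rw [he, abs_div, abs_mul]
        rw [abs_of_pos hδpos, div_le_one hδpos]
        have h1 : |1 - ρ| ≤ 1 := by
          rw [abs_of_nonneg (by linarith)]
          linarith
        nlinarith [abs_nonneg (b k - a k), abs_nonneg (1 - ρ)]
      calc (∑ k, |(B k - A k) / δ|) ≤ ∑ _k : Fin r, (1:ℝ) :=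
            Finset.sum_le_sum fun k _ => hk k
        _ = (r:ℝ) := by
            rw [Finset.sum_const, Finset.card_univ, Fintype.card_fin, nsmul_eq_mul, mul_one]
    have hAlo : ∀ i, ρ / (r:ℝ) ≤ A i := by
      intro i
      have h1 : A i = (1 - ρ) * a i + ρ * (1 / r) := by simp only [hA]; ring
      have h2 : 0 ≤ (1 - ρ) * a i := mul_nonneg (by linarith) (ha.1 i)
      have h3 : ρ * (1 / (r:ℝ)) = ρ / r := by ring
      linarith [h1.ge, h1.le]
    have hBlo : ∀ i, ρ / (r:ℝ) ≤ B i := by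
      intro i
      have h1 : B i = (1 - ρ) * b i + ρ * (1 / r) := by simp only [hB]; ring
      have h2 : 0 ≤ (1 - ρ) * b i := mul_nonneg (by linarith) (hb.1 i)
      have h3 : ρ * (1 / (r:ℝ)) = ρ / r := by ring
      linarith [h1.ge, h1.le]
    have hm : ∀ t ∈ Ioo (0:ℝ) δ, ∀ i,
        0 < ρ / (r:ℝ) ∧ ρ / (r:ℝ) ≤ A i + t / δ * (B i - A i) := by
      intro t ht i
      refine ⟨div_pos hρpos hrR, ?_⟩
      have hs0 : 0 ≤ t / δ := div_nonneg ht.1.le hδpos.le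
      have hs1 : t / δ ≤ 1 := (div_le_one hδpos).mpr ht.2.le
      have he : A i + t / δ * (B i - A i) = (1 - t / δ) * A i + t / δ * B i := by ring
      rw [he]
      have h1 := hAlo i
      have h2 := hBlo i
      nlinarith
    have hcost := segment_cost M N hN0 hroute A B hAsimp hBsimp δ hδpos (r:ℝ) hW
      (fun _ => ρ / (r:ℝ)) hm
    calc SEnd M δ A B ≤ _ := hcost
      _ = ∫⁻ _t in Ioc (0:ℝ) δ, ENNReal.ofReal D₂ := by
          apply MeasureTheory.setLIntegral_congr_fun measurableSet_Ioc
          refine fun t _ => ?_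
          rw [hD₂]
      _ ≤ ENNReal.ofReal (D₂ * δ) := lint_const D₂ δ hD₂0
      _ ≤ ENNReal.ofReal (ε / 3) := ENNReal.ofReal_le_ofReal hmidbd
  -- concatenate
  refine ⟨ρ + (δ + ρ), by linarith, ?_⟩
  calc SEnd M (ρ + (δ + ρ)) a b
      ≤ SEnd M ρ a A + SEnd M (δ + ρ) A b :=
        SEnd_concat M hρpos (by linarith) a A b
    _ ≤ SEnd M ρ a A + (SEnd M δ A B + SEnd M ρ B b) :=
        add_le_add le_rfl (SEnd_concat M hδpos hρpos A B b)
    _ ≤ ENNReal.ofReal (ε / 3) + (ENNReal.ofReal (ε / 3) + ENNReal.ofReal (ε / 3)) :=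
        add_le_add hseg1 (add_le_add hseg2 hseg3)
    _ = ENNReal.ofReal ε := by
        rw [← ENNReal.ofReal_add (by linarith) (by linarith),
          ← ENNReal.ofReal_add (by linarith) (by linarith)]
        congr 1
        ring

end Stmt3Aux
namespace Stmt3Aux

open MeasureTheory Set

variable {r : ℕ}

lemma quasi_tri (M : MeanFieldModel r) {T₁ T₃ : ℝ} (h₁ : 0 < T₁) (h₃ : 0 < T₃)
    (ν₁ ν₂ ξ₁ ξ₂ : Fin r → ℝ) :
    quasipotential M ν₁ ξ₁ ≤
      SEnd M T₁ ν₁ ν₂ + quasipotential M ν₂ ξ₂ + SEnd M T₃ ξ₂ ξ₁ := by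
  have hstep : ∀ T : ℝ, 0 < T →
      quasipotential M ν₁ ξ₁ ≤ SEnd M T₁ ν₁ ν₂ + SEnd M T ν₂ ξ₂ + SEnd M T₃ ξ₂ ξ₁ := by
    intro T hT
    calc quasipotential M ν₁ ξ₁ ≤ SEnd M (T₁ + (T + T₃)) ν₁ ξ₁ :=
          iInf₂_le _ (by linarith)
      _ ≤ SEnd M T₁ ν₁ ν₂ + SEnd M (T + T₃) ν₂ ξ₁ :=
          SEnd_concat M h₁ (by linarith) ν₁ ν₂ ξ₁
      _ ≤ SEnd M T₁ ν₁ ν₂ + (SEnd M T ν₂ ξ₂ + SEnd M T₃ ξ₂ ξ₁) :=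
          add_le_add le_rfl (SEnd_concat M hT h₃ ν₂ ξ₂ ξ₁)
      _ = SEnd M T₁ ν₁ ν₂ + SEnd M T ν₂ ξ₂ + SEnd M T₃ ξ₂ ξ₁ := (add_assoc _ _ _).symm
  have hV : SEnd M T₁ ν₁ ν₂ + quasipotential M ν₂ ξ₂ + SEnd M T₃ ξ₂ ξ₁
      = ⨅ T : ℝ, (SEnd M T₁ ν₁ ν₂ + (⨅ (_ : 0 < T), SEnd M T ν₂ ξ₂) + SEnd M T₃ ξ₂ ξ₁) := by
    rw [quasipotential, ENNReal.add_iInf, ENNReal.iInf_add]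
  rw [hV]
  refine le_iInf fun T => ?_
  by_cases hT : 0 < T
  · rw [iInf_pos hT]
    exact hstep T hT
  · rw [iInf_neg hT]
    simp

end Stmt3Aux


/-- the map `(ν, ξ) ↦ V(ξ|ν)` is uniformly continuous on
`M₁(Z) × M₁(Z)` (two-sided `ε`-closeness of the `[0,∞]`-valued function under
`δ`-closeness of the arguments). -/
theorem stmt3 (r : ℕ) (hr : 0 < r) (M : MeanFieldModel r) :
    ∀ ε : ℝ, 0 < ε → ∃ δ : ℝ, 0 < δ ∧
      ∀ ν₁ ∈ stdSimplex ℝ (Fin r), ∀ ξ₁ ∈ stdSimplex ℝ (Fin r),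
        ∀ ν₂ ∈ stdSimplex ℝ (Fin r), ∀ ξ₂ ∈ stdSimplex ℝ (Fin r),
          dist ν₁ ν₂ < δ → dist ξ₁ ξ₂ < δ →
            quasipotential M ν₁ ξ₁ ≤ quasipotential M ν₂ ξ₂ + ENNReal.ofReal ε ∧
            quasipotential M ν₂ ξ₂ ≤ quasipotential M ν₁ ξ₁ + ENNReal.ofReal ε := by
  intro ε hε
  obtain ⟨δ, hδ, hkey⟩ := Stmt3Aux.key_connect M hr (ε / 2) (by linarith)
  refine ⟨δ, hδ, ?_⟩
  intro ν₁ hν₁ ξ₁ hξ₁ ν₂ hν₂ ξ₂ hξ₂ hd1 hd2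
  have main : ∀ p ∈ stdSimplex ℝ (Fin r), ∀ q ∈ stdSimplex ℝ (Fin r),
      ∀ u ∈ stdSimplex ℝ (Fin r), ∀ v ∈ stdSimplex ℝ (Fin r),
      dist p u < δ → dist v q < δ →
      quasipotential M p q ≤ quasipotential M u v + ENNReal.ofReal ε := by
    intro p hp q hq u hu v hv h1 h2
    obtain ⟨Ta, hTa, hSa⟩ := hkey p hp u hu h1
    obtain ⟨Tb, hTb, hSb⟩ := hkey v hv q hq h2
    calc quasipotential M p q
        ≤ SEnd M Ta p u + quasipotential M u v + SEnd M Tb v q :=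
          Stmt3Aux.quasi_tri M hTa hTb p u q v
      _ ≤ ENNReal.ofReal (ε / 2) + quasipotential M u v + ENNReal.ofReal (ε / 2) :=
          add_le_add (add_le_add hSa le_rfl) hSb
      _ = quasipotential M u v + (ENNReal.ofReal (ε / 2) + ENNReal.ofReal (ε / 2)) := by
          ring
      _ = quasipotential M u v + ENNReal.ofReal ε := by
          rw [← ENNReal.ofReal_add (by linarith) (by linarith)]
          norm_num
  exact ⟨main ν₁ hν₁ ξ₁ hξ₁ ν₂ hν₂ ξ₂ hξ₂ hd1 (by rw [dist_comm]; exact hd2),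
         main ν₂ hν₂ ξ₂ hξ₂ ν₁ hν₁ ξ₁ hξ₁ (by rw [dist_comm]; exact hd1) hd2⟩
end

section
/- Under assumptions (A1)–(A3), there exists a constant K < ∞ such that for every T > 0, every time-varying rate matrix L(t), and every absolutely continuous path μ : [0,T] → M_1(Z) with μ̇(t) = L(t)^⊤ μ(t) a.e. and finite running cost I_{[0,T]}(μ,L), one has ∫_0^T Σ_{(i,j)∈E} μ(t)(i) l_{i,j}(t) dt ≤ I_{[0,T]}(μ,L) + K T. -/
open MeasureTheory Set ENNReal Filter

lemma tauStar_nonneg {x : ℝ} (hx : -1 ≤ x) : 0 ≤ tauStar x := by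
  unfold tauStar
  rcases eq_or_lt_of_le hx with h | h
  · simp [← h]
  · have hy : 0 < x + 1 := by linarith
    have h1 : Real.log (1 / (x + 1)) ≤ 1 / (x + 1) - 1 :=
      Real.log_le_sub_one_of_pos (by positivity)
    rw [Real.log_div one_ne_zero hy.ne', Real.log_one] at h1
    have h2 : (x + 1) * (0 - Real.log (x + 1)) ≤ (x + 1) * (1 / (x + 1) - 1) :=
      mul_le_mul_of_nonneg_left (by linarith) hy.le
    have h3 : (x + 1) * (1 / (x + 1)) = 1 := by field_simp
    nlinarith

lemma key_ineq {a u : ℝ} (ha : 0 < a) (hu : 0 ≤ u) :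
    u ≤ a * tauStar (u / a - 1) + Real.exp 2 * a := by
  have hE : (0:ℝ) < Real.exp 2 := Real.exp_pos 2
  have hτ : a * tauStar (u / a - 1) = u * Real.log (u / a) - u + a := by
    unfold tauStar
    field_simp
    ring
  rw [hτ]
  rcases eq_or_lt_of_le hu with h | h
  · simp [← h]; nlinarith
  · -- u > 0 : show 2u - u log(u/a) ≤ e² a
    have hz : 0 < Real.exp 2 * a / u := by positivity
    have hlog : Real.log (Real.exp 2 * a / u) ≤ Real.exp 2 * a / u - 1 :=
      Real.log_le_sub_one_of_pos hz
    have hexp : Real.log (Real.exp 2 * a / u)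
        = 2 + Real.log a - Real.log u := by
      rw [Real.log_div (by positivity) h.ne', Real.log_mul (Real.exp_ne_zero 2) ha.ne',
        Real.log_exp]
    have hdiv : Real.log (u / a) = Real.log u - Real.log a :=
      Real.log_div h.ne' ha.ne'
    have h2 : u * Real.log (Real.exp 2 * a / u) ≤ u * (Real.exp 2 * a / u - 1) :=
      mul_le_mul_of_nonneg_left (hexp ▸ hexp ▸ hlog) hu
    have h3 : u * (Real.exp 2 * a / u) = Real.exp 2 * a := by field_simp
    rw [hexp] at h2
    rw [hdiv]
    nlinarith

/-- there is a constant `K < ∞` such that for every `T > 0`, every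
time-varying rate matrix `L` and every absolutely continuous path `μ` in `M₁(Z)`
with `μ̇ = Lᵀ μ` a.e. and finite running cost,
`∫_0^T Σ_{(i,j)∈E} μ(t)(i) l_{i,j}(t) dt ≤ I_{[0,T]}(μ,L) + K T`. -/
theorem stmt4 (r : ℕ) (hr : 0 < r) (M : MeanFieldModel r) :
    ∃ K : ℝ, ∀ T : ℝ, 0 < T → ∀ (L : ℝ → Fin r → Fin r → ℝ) (μ : ℝ → Fin r → ℝ),
      IsRateMatrix M L → SolvesODE L μ T →
      (∀ t ∈ Icc (0 : ℝ) T, μ t ∈ stdSimplex ℝ (Fin r)) →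
      runningCost M μ L T ≠ ⊤ →
      (∫⁻ t in Ioc (0 : ℝ) T, ENNReal.ofReal (∑ p ∈ M.E, μ t p.1 * L t p.1 p.2)) ≤
        runningCost M μ L T + ENNReal.ofReal (K * T) := by
  classical
  set C : ℝ := max M.Cb 1 with hC
  have hC1 : (1:ℝ) ≤ C := le_max_right _ _
  have hCb : M.Cb ≤ C := le_max_left _ _
  have hE2 : (0:ℝ) < Real.exp 2 := Real.exp_pos 2
  refine ⟨M.E.card * (Real.exp 2 * C), ?_⟩
  intro T hT L μ hL hODE hsimp _hfin
  have hK0 : (0:ℝ) ≤ M.E.card * (Real.exp 2 * C) := by positivity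
  have key : ∀ t ∈ Ioc (0:ℝ) T,
      (∑ p ∈ M.E, μ t p.1 * L t p.1 p.2)
        ≤ (∑ p ∈ M.E, μ t p.1 * M.lam p.1 p.2 (μ t) *
            tauStar (L t p.1 p.2 / M.lam p.1 p.2 (μ t) - 1))
          + M.E.card * (Real.exp 2 * C) := by
    intro t ht
    have hμ : μ t ∈ stdSimplex ℝ (Fin r) := hsimp t ⟨ht.1.le, ht.2⟩
    have hper : ∀ p ∈ M.E, μ t p.1 * L t p.1 p.2
        ≤ μ t p.1 * M.lam p.1 p.2 (μ t) *
            tauStar (L t p.1 p.2 / M.lam p.1 p.2 (μ t) - 1) + Real.exp 2 * C := by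
      intro p hp
      set a := M.lam p.1 p.2 (μ t) with ha
      set u := L t p.1 p.2 with hu
      have hane : (p.1, p.2) = p := rfl
      have hac : M.c ≤ a := M.lam_lower p hp (μ t) hμ
      have ha0 : 0 < a := lt_of_lt_of_le M.c_pos hac
      have haC : a ≤ C := le_trans (M.lam_upper p hp (μ t) hμ) hCb
      have hne : p.1 ≠ p.2 := by
        intro h
        apply M.no_diag p.1
        have : p = (p.1, p.1) := by rw [← Prod.mk.eta (p := p), ← h]
        rwa [this] at hp
      have hu0 : 0 ≤ u := hL.2.1 t p.1 p.2 hne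
      have hm0 : 0 ≤ μ t p.1 := hμ.1 p.1
      have hm1 : μ t p.1 ≤ 1 := by
        have := hμ.2
        calc μ t p.1 ≤ ∑ j, μ t j :=
          Finset.single_le_sum (fun j _ => hμ.1 j) (Finset.mem_univ p.1)
        _ = 1 := hμ.2
      have hkey : u ≤ a * tauStar (u / a - 1) + Real.exp 2 * a := key_ineq ha0 hu0
      have hτ : 0 ≤ tauStar (u / a - 1) := by
        apply tauStar_nonneg
        have : 0 ≤ u / a := by positivity
        linarith
      nlinarith [mul_le_mul_of_nonneg_left hkey hm0,
        mul_le_mul_of_nonneg_left haC (mul_nonneg hE2.le hm0),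
        mul_le_mul_of_nonneg_right hm1 (mul_nonneg hE2.le (ha0.le.trans haC))]
    calc (∑ p ∈ M.E, μ t p.1 * L t p.1 p.2)
        ≤ ∑ p ∈ M.E, (μ t p.1 * M.lam p.1 p.2 (μ t) *
            tauStar (L t p.1 p.2 / M.lam p.1 p.2 (μ t) - 1) + Real.exp 2 * C) :=
          Finset.sum_le_sum hper
      _ = (∑ p ∈ M.E, μ t p.1 * M.lam p.1 p.2 (μ t) *
            tauStar (L t p.1 p.2 / M.lam p.1 p.2 (μ t) - 1))
          + M.E.card * (Real.exp 2 * C) := by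
        rw [Finset.sum_add_distrib, Finset.sum_const, nsmul_eq_mul]
  calc (∫⁻ t in Ioc (0 : ℝ) T, ENNReal.ofReal (∑ p ∈ M.E, μ t p.1 * L t p.1 p.2))
      ≤ ∫⁻ t in Ioc (0 : ℝ) T,
          (ENNReal.ofReal (∑ p ∈ M.E, μ t p.1 * M.lam p.1 p.2 (μ t) *
            tauStar (L t p.1 p.2 / M.lam p.1 p.2 (μ t) - 1))
           + ENNReal.ofReal (M.E.card * (Real.exp 2 * C))) := by
        apply lintegral_mono_ae
        apply (ae_restrict_iff' measurableSet_Ioc).2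
        filter_upwards with t
        intro ht
        exact le_trans (ENNReal.ofReal_le_ofReal (key t ht)) ENNReal.ofReal_add_le
    _ = runningCost M μ L T
        + ENNReal.ofReal (M.E.card * (Real.exp 2 * C)) * volume (Ioc (0:ℝ) T) := by
        rw [lintegral_add_right _ measurable_const, lintegral_const,
          Measure.restrict_apply_univ]
        rfl
    _ = runningCost M μ L T + ENNReal.ofReal (M.E.card * (Real.exp 2 * C) * T) := by
        rw [Real.volume_Ioc, sub_zero, ← ENNReal.ofReal_mul hK0]
end
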